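/- arXiv:2507.22654 — 2 statements merged into one kernel-verified Lean document; each statement's English description precedes it below -/
import Mathlib

section
/- Let 𝕃 be a real closed field, 𝕂 ⊇ 𝕃 a real closed field containing a big element b, and V ⊆ 𝕃ⁿ an algebraic set. Then the Archimedean spectrum Spec_arch(V(𝕂)) is an open subset of the space RSp(V(𝕂)) of closed points of the real spectrum, and it is a countable union of compact subsets of RSp(V(𝕂)); concretely, with A_k(𝕂) = {v ∈ V(𝕂) : Σᵢ vᵢ² < b^k} and B_k(𝕂) = {v ∈ V(𝕂) : Σᵢ vᵢ² ≤ b^k}, one has Spec_arch(V(𝕂)) = ⋃_{k∈ℕ} Ã_k(𝕂) ∩ RSp(V(𝕂)) = ⋃_{k∈ℕ} B̃_k(𝕂) ∩ RSp(V(𝕂)). In particular Spec_arch(V(𝕂)) is σ-compact and locally compact. -/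
/-- A real closed field: an ordered field in which every nonnegative element is a square
and every polynomial of odd degree has a root. -/
class IsRealClosedField (K : Type*) [Field K] [LinearOrder K] [IsStrictOrderedRing K] : Prop where
  isSquare_of_nonneg : ∀ x : K, 0 ≤ x → IsSquare x
  exists_root_of_odd : ∀ p : Polynomial K, Odd p.natDegree → ∃ x : K, p.eval x = 0

/-- A prime cone of a commutative ring (the points of the real spectrum). -/
structure IsPrimeCone {A : Type*} [CommRing A] (c : Set A) : Prop where
  neg_one_not_mem : (-1 : A) ∉ c
  add_mem : ∀ ⦃x y : A⦄, x ∈ c → y ∈ c → x + y ∈ c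
  mul_mem : ∀ ⦃x y : A⦄, x ∈ c → y ∈ c → x * y ∈ c
  total : ∀ x : A, x ∈ c ∨ -x ∈ c
  prime : ∀ x y : A, x * y ∈ c → -(x * y) ∈ c → (x ∈ c ∧ -x ∈ c) ∨ (y ∈ c ∧ -y ∈ c)

/-- The real spectrum of a commutative ring, as the set of prime cones. -/
def RealSpectrum (A : Type*) [CommRing A] : Type _ :=
  {c : Set A // IsPrimeCone c}

namespace RealSpectrum

variable {A B : Type*} [CommRing A] [CommRing B]

/-- The spectral topology, generated by the basic open sets
`Ũ(f) = {α | ρ_α(f) > 0} = {α | -f ∉ α}`. -/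
instance : TopologicalSpace (RealSpectrum A) :=
  TopologicalSpace.generateFrom {U | ∃ f : A, U = {α : RealSpectrum A | -f ∉ α.1}}

/-- Functoriality of the real spectrum: a ring homomorphism induces a map on real spectra
by taking preimages of prime cones. -/
def comap (φ : A →+* B) (β : RealSpectrum B) : RealSpectrum A :=
  ⟨φ ⁻¹' β.1, by
    obtain ⟨h1, h2, h3, h4, h5⟩ := β.2
    refine ⟨?_, ?_, ?_, ?_, ?_⟩
    · intro h
      rw [Set.mem_preimage, map_neg, map_one] at h
      exact h1 h
    · intro x y hx hy
      rw [Set.mem_preimage, map_add]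
      exact h2 hx hy
    · intro x y hx hy
      rw [Set.mem_preimage, map_mul]
      exact h3 hx hy
    · intro x
      rcases h4 (φ x) with h | h
      · exact Or.inl h
      · exact Or.inr (by rw [Set.mem_preimage, map_neg]; exact h)
    · intro x y hxy hnxy
      have hxy' : φ x * φ y ∈ β.1 := by rw [← map_mul]; exact hxy
      have hnxy' : -(φ x * φ y) ∈ β.1 := by rw [← map_mul, ← map_neg]; exact hnxy
      rcases h5 (φ x) (φ y) hxy' hnxy' with ⟨ha, hb⟩ | ⟨ha, hb⟩
      · exact Or.inl ⟨ha, by rw [Set.mem_preimage, map_neg]; exact hb⟩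
      · exact Or.inr ⟨ha, by rw [Set.mem_preimage, map_neg]; exact hb⟩⟩

/-- A point of the real spectrum of a `K`-algebra is *Archimedean over `K`* if the
associated real closed field (the real closure of the residue field at the point) is
Archimedean over `K`; equivalently, every element `a/b` of the residue field at the point
is bounded above by an element of `K`. -/
def IsArchPoint (K : Type*) [CommRing K] {A : Type*} [CommRing A] [Algebra K A]
    (α : RealSpectrum A) : Prop :=
  ∀ a b : A, ¬(b ∈ α.1 ∧ -b ∈ α.1) →
    ∃ k : K, (algebraMap K A k * b - a) * b ∈ α.1

end RealSpectrum

/-- The positive cone of a linearly ordered field, as a point of its real spectrum. -/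
def nonnegCone (K : Type*) [Field K] [LinearOrder K] [IsStrictOrderedRing K] : RealSpectrum K :=
  ⟨{k : K | 0 ≤ k}, by
    refine ⟨?_, fun x y hx hy => add_nonneg hx hy, fun x y hx hy => mul_nonneg hx hy,
      fun x => ?_, fun x y hxy hnxy => ?_⟩
    · intro h
      have : (0 : K) ≤ -1 := h
      linarith
    · rcases le_total 0 x with h | h
      · exact Or.inl h
      · exact Or.inr (by simpa using h)
    · have h0 : x * y = 0 := le_antisymm (by simpa using hnxy) hxy
      rcases mul_eq_zero.mp h0 with h | h
      · exact Or.inl ⟨by simp [h], by simp [h]⟩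
      · exact Or.inr ⟨by simp [h], by simp [h]⟩⟩

set_option linter.unusedSectionVars false

section Aux

variable {A : Type*} [CommRing A]

lemma IsPrimeCone.sq_mem {c : Set A} (hc : IsPrimeCone c) (x : A) : x * x ∈ c := by
  rcases hc.total x with h | h
  · exact hc.mul_mem h h
  · have := hc.mul_mem h h
    rwa [neg_mul_neg] at this

lemma IsPrimeCone.one_mem' {c : Set A} (hc : IsPrimeCone c) : (1 : A) ∈ c := by
  have := hc.sq_mem 1; rwa [mul_one] at this

lemma IsPrimeCone.zero_mem' {c : Set A} (hc : IsPrimeCone c) : (0 : A) ∈ c := by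
  have := hc.sq_mem 0; rwa [mul_zero] at this

lemma RealSpectrum.isOpen_basic (f : A) : IsOpen {α : RealSpectrum A | -f ∉ α.1} :=
  TopologicalSpace.GenerateOpen.basic _ ⟨f, rfl⟩

lemma RealSpectrum.mem_of_cone_subset {α β : RealSpectrum A} (h : α.1 ⊆ β.1)
    {U : Set (RealSpectrum A)} (hU : IsOpen U) (hβ : β ∈ U) : α ∈ U := by
  have hU' : TopologicalSpace.GenerateOpen
      {U | ∃ f : A, U = {α : RealSpectrum A | -f ∉ α.1}} U := hU
  clear hU
  induction hU' with
  | basic V hV => obtain ⟨f, rfl⟩ := hV; exact fun hf => hβ (h hf)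
  | univ => trivial
  | inter V W hV hW ihV ihW => exact ⟨ihV hβ.1, ihW hβ.2⟩
  | sUnion S hS ih => obtain ⟨V, hV, hβV⟩ := hβ; exact ⟨V, hV, ih V hV hβV⟩

lemma RealSpectrum.eq_of_isClosed_singleton {α β : RealSpectrum A}
    (hc : IsClosed ({α} : Set (RealSpectrum A))) (h : α.1 ⊆ β.1) : β = α := by
  have hmem : β ∈ closure ({α} : Set (RealSpectrum A)) := by
    rw [mem_closure_iff]
    intro o ho hβo
    exact ⟨α, RealSpectrum.mem_of_cone_subset h ho hβo, rfl⟩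
  rwa [hc.closure_eq, Set.mem_singleton_iff] at hmem

lemma RealSpectrum.isClosed_singleton_of_maximal {α : RealSpectrum A}
    (hmax : ∀ c : Set A, IsPrimeCone c → α.1 ⊆ c → c = α.1) :
    IsClosed ({α} : Set (RealSpectrum A)) := by
  apply isClosed_of_closure_subset
  intro γ hγ
  rw [mem_closure_iff] at hγ
  have hsub : α.1 ⊆ γ.1 := by
    intro f hf
    by_contra hfγ
    have hopen : IsOpen {δ : RealSpectrum A | -(-f) ∉ δ.1} := RealSpectrum.isOpen_basic (-f)
    have hγo : γ ∈ {δ : RealSpectrum A | -(-f) ∉ δ.1} := by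
      show -(-f) ∉ γ.1; rwa [neg_neg]
    obtain ⟨δ, hδ1, hδ2⟩ := hγ _ hopen hγo
    rw [Set.mem_singleton_iff] at hδ2
    subst hδ2
    rw [Set.mem_setOf_eq, neg_neg] at hδ1
    exact hδ1 hf
  have := hmax γ.1 γ.2 hsub
  exact Set.mem_singleton_iff.2 (Subtype.ext this)

lemma RealSpectrum.exists_le_maximal (α : RealSpectrum A) :
    ∃ β : RealSpectrum A, α.1 ⊆ β.1 ∧ ∀ c : Set A, IsPrimeCone c → β.1 ⊆ c → c = β.1 := by
  have key : ∀ ch ⊆ {c : Set A | IsPrimeCone c}, IsChain (· ⊆ ·) ch → ch.Nonempty →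
      ∃ ub ∈ {c : Set A | IsPrimeCone c}, ∀ s ∈ ch, s ⊆ ub := by
    rintro ch hch hchain ⟨c0, hc0⟩
    have hPC : ∀ s ∈ ch, IsPrimeCone s := fun s hs => hch hs
    refine ⟨⋃₀ ch, ?_, fun s hs => Set.subset_sUnion_of_mem hs⟩
    constructor
    · rintro ⟨s, hs, hmem⟩
      exact (hPC s hs).neg_one_not_mem hmem
    · rintro x y ⟨s, hs, hx⟩ ⟨t, ht, hy⟩
      rcases hchain.total hs ht with hst | hts
      · exact ⟨t, ht, (hPC t ht).add_mem (hst hx) hy⟩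
      · exact ⟨s, hs, (hPC s hs).add_mem hx (hts hy)⟩
    · rintro x y ⟨s, hs, hx⟩ ⟨t, ht, hy⟩
      rcases hchain.total hs ht with hst | hts
      · exact ⟨t, ht, (hPC t ht).mul_mem (hst hx) hy⟩
      · exact ⟨s, hs, (hPC s hs).mul_mem hx (hts hy)⟩
    · intro x
      rcases (hPC c0 hc0).total x with h | h
      · exact Or.inl ⟨c0, hc0, h⟩
      · exact Or.inr ⟨c0, hc0, h⟩
    · rintro x y ⟨s, hs, hx⟩ ⟨t, ht, hy⟩
      rcases hchain.total hs ht with hst | hts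
      · rcases (hPC t ht).prime x y (hst hx) hy with ⟨h1, h2⟩ | ⟨h1, h2⟩
        · exact Or.inl ⟨⟨t, ht, h1⟩, ⟨t, ht, h2⟩⟩
        · exact Or.inr ⟨⟨t, ht, h1⟩, ⟨t, ht, h2⟩⟩
      · rcases (hPC s hs).prime x y hx (hts hy) with ⟨h1, h2⟩ | ⟨h1, h2⟩
        · exact Or.inl ⟨⟨s, hs, h1⟩, ⟨s, hs, h2⟩⟩
        · exact Or.inr ⟨⟨s, hs, h1⟩, ⟨s, hs, h2⟩⟩
  obtain ⟨m, hsub, hmax⟩ := zorn_subset_nonempty {c : Set A | IsPrimeCone c} key α.1 α.2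
  exact ⟨⟨m, hmax.1⟩, hsub, fun c hc hsubc => Set.Subset.antisymm (hmax.2 hc hsubc) hsubc⟩

end Aux

section Compactness

variable {A : Type*} [CommRing A]

open TopologicalSpace

private lemma clopen_eval (a : A) : IsClopen {g : A → Bool | g a = true} := by
  have : {g : A → Bool | g a = true} = (fun g : A → Bool => g a) ⁻¹' {true} := rfl
  rw [this]
  exact (isClopen_discrete _).preimage (continuous_apply a)

lemma RealSpectrum.compactSpace : CompactSpace (RealSpectrum A) := by
  classical
  set T : Set (A → Bool) := {g | IsPrimeCone {a : A | g a = true}} with hTdef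
  have hC : ∀ a : A, IsClopen {g : A → Bool | g a = true} := clopen_eval
  have hT : T = {g : A → Bool | g (-1) = true}ᶜ ∩
      ((⋂ p : A × A, ({g : A → Bool | g p.1 = true}ᶜ ∪ {g | g p.2 = true}ᶜ ∪
        {g | g (p.1 + p.2) = true})) ∩
      ((⋂ p : A × A, ({g : A → Bool | g p.1 = true}ᶜ ∪ {g | g p.2 = true}ᶜ ∪
        {g | g (p.1 * p.2) = true})) ∩
      ((⋂ x : A, ({g : A → Bool | g x = true} ∪ {g | g (-x) = true})) ∩
      (⋂ p : A × A, ({g : A → Bool | g (p.1 * p.2) = true}ᶜ ∪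
        {g | g (-(p.1 * p.2)) = true}ᶜ ∪
        ({g | g p.1 = true} ∩ {g | g (-p.1) = true}) ∪
        ({g | g p.2 = true} ∩ {g | g (-p.2) = true})))))) := by
    ext g
    simp only [hTdef, Set.mem_setOf_eq, Set.mem_inter_iff, Set.mem_compl_iff,
      Set.mem_iInter, Set.mem_union, Prod.forall]
    constructor
    · rintro ⟨h1, h2, h3, h4, h5⟩
      refine ⟨h1, fun x y => ?_, fun x y => ?_, fun x => h4 x, fun x y => ?_⟩
      · by_cases hx : g x = true
        · by_cases hy : g y = true
          · exact Or.inr (h2 hx hy)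
          · exact Or.inl (Or.inr hy)
        · exact Or.inl (Or.inl hx)
      · by_cases hx : g x = true
        · by_cases hy : g y = true
          · exact Or.inr (h3 hx hy)
          · exact Or.inl (Or.inr hy)
        · exact Or.inl (Or.inl hx)
      · by_cases hxy : g (x * y) = true
        · by_cases hnxy : g (-(x * y)) = true
          · rcases h5 x y hxy hnxy with ⟨ha, hb⟩ | ⟨ha, hb⟩
            · exact Or.inl (Or.inr ⟨ha, hb⟩)
            · exact Or.inr ⟨ha, hb⟩
          · exact Or.inl (Or.inl (Or.inr hnxy))
        · exact Or.inl (Or.inl (Or.inl hxy))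
    · rintro ⟨h1, h2, h3, h4, h5⟩
      refine ⟨h1, fun x y hx hy => ?_, fun x y hx hy => ?_, h4, fun x y hxy hnxy => ?_⟩
      · rcases h2 x y with (h | h) | h
        · exact absurd hx h
        · exact absurd hy h
        · exact h
      · rcases h3 x y with (h | h) | h
        · exact absurd hx h
        · exact absurd hy h
        · exact h
      · rcases h5 x y with ((h | h) | h) | h
        · exact absurd hxy h
        · exact absurd hnxy h
        · exact Or.inl h
        · exact Or.inr h
  have hclosed : IsClosed T := by
    rw [hT]
    refine ((hC _).compl.isClosed).inter (IsClosed.inter ?_ (IsClosed.inter ?_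
      (IsClosed.inter ?_ ?_)))
    · exact isClosed_iInter fun p => (((hC _).compl.isClosed.union
        (hC _).compl.isClosed).union (hC _).isClosed)
    · exact isClosed_iInter fun p => (((hC _).compl.isClosed.union
        (hC _).compl.isClosed).union (hC _).isClosed)
    · exact isClosed_iInter fun x => ((hC _).isClosed.union (hC _).isClosed)
    · exact isClosed_iInter fun p => ((((hC _).compl.isClosed.union
        (hC _).compl.isClosed).union ((hC _).isClosed.inter (hC _).isClosed)).union
        ((hC _).isClosed.inter (hC _).isClosed))
  have hcompT : IsCompact T := hclosed.isCompact
  haveI : CompactSpace ↥T := isCompact_iff_compactSpace.mp hcompT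
  let φ : ↥T → RealSpectrum A := fun g => ⟨{a : A | g.1 a = true}, g.2⟩
  have hcont : Continuous φ := by
    rw [continuous_generateFrom_iff]
    rintro U ⟨f, rfl⟩
    have : φ ⁻¹' {α : RealSpectrum A | -f ∉ α.1} =
        ((fun g : ↥T => g.1 (-f)) ⁻¹' {true})ᶜ := by
      ext g
      exact Iff.rfl
    rw [this]
    exact ((isClosed_discrete {true}).preimage
      ((continuous_apply (A := fun _ : A => Bool) (-f)).comp
        (continuous_subtype_val (p := (· ∈ T))))).isOpen_compl
  have hsurj : Function.Surjective φ := by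
    intro α
    have hmem : (fun a : A => if a ∈ α.1 then true else false) ∈ T := by
      have : {a : A | (if a ∈ α.1 then true else false) = true} = α.1 := by
        ext a; by_cases h : a ∈ α.1 <;> simp [h]
      show IsPrimeCone _
      rw [this]; exact α.2
    refine ⟨⟨_, hmem⟩, ?_⟩
    apply Subtype.ext
    show {a : A | (if a ∈ α.1 then true else false) = true} = α.1
    ext a; by_cases h : a ∈ α.1 <;> simp [h]
  rw [← isCompact_univ_iff]
  have : (Set.univ : Set (RealSpectrum A)) = Set.range φ := (hsurj.range_eq).symm
  rw [this]
  exact isCompact_range hcont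

lemma RealSpectrum.compactSpace_closedPoints :
    CompactSpace {α : RealSpectrum A // IsClosed ({α} : Set (RealSpectrum A))} := by
  haveI := RealSpectrum.compactSpace (A := A)
  rw [← isCompact_univ_iff]
  rw [isCompact_iff_finite_subcover]
  intro ι U hU hcov
  have hch : ∀ i, ∃ V : Set (RealSpectrum A), IsOpen V ∧
      (Subtype.val : {α : RealSpectrum A // IsClosed ({α} : Set (RealSpectrum A))} →
        RealSpectrum A) ⁻¹' V = U i :=
    fun i => isOpen_induced_iff.mp (hU i)
  choose V hVopen hVeq using hch
  have hcovX : (Set.univ : Set (RealSpectrum A)) ⊆ ⋃ i, V i := by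
    intro β _
    obtain ⟨γ, hβγ, hγmax⟩ := RealSpectrum.exists_le_maximal β
    have hγc : IsClosed ({γ} : Set (RealSpectrum A)) :=
      RealSpectrum.isClosed_singleton_of_maximal hγmax
    have : (⟨γ, hγc⟩ : {α : RealSpectrum A // IsClosed ({α} : Set (RealSpectrum A))}) ∈
        ⋃ i, U i := hcov (Set.mem_univ _)
    obtain ⟨i, hi⟩ := Set.mem_iUnion.mp this
    have hγV : γ ∈ V i := by rw [← hVeq i] at hi; exact hi
    exact Set.mem_iUnion.mpr ⟨i, RealSpectrum.mem_of_cone_subset hβγ (hVopen i) hγV⟩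
  obtain ⟨t, ht⟩ := isCompact_univ.elim_finite_subcover V hVopen hcovX
  refine ⟨t, fun x _ => ?_⟩
  have := ht (Set.mem_univ x.1)
  obtain ⟨i, hit, hxi⟩ := Set.mem_iUnion₂.mp this
  exact Set.mem_iUnion₂.mpr ⟨i, hit, by rw [← hVeq i]; exact hxi⟩

lemma RealSpectrum.t2_closedPoints :
    T2Space {α : RealSpectrum A // IsClosed ({α} : Set (RealSpectrum A))} := by
  constructor
  intro x y hxy
  have hne : x.1.1 ≠ y.1.1 := fun h => hxy (Subtype.ext (Subtype.ext h))
  have hnotsub : ¬ x.1.1 ⊆ y.1.1 := by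
    intro hsub
    exact hxy (Subtype.ext (RealSpectrum.eq_of_isClosed_singleton x.2 hsub).symm)
  have hnotsub' : ¬ y.1.1 ⊆ x.1.1 := by
    intro hsub
    exact hxy (Subtype.ext (RealSpectrum.eq_of_isClosed_singleton y.2 hsub))
  obtain ⟨f, hf1, hf2⟩ := Set.not_subset.mp hnotsub
  obtain ⟨h, hh1, hh2⟩ := Set.not_subset.mp hnotsub'
  -- f ∈ x \ y, h ∈ y \ x ; separating element g = f - h
  refine ⟨Subtype.val ⁻¹' {δ : RealSpectrum A | -(f - h) ∉ δ.1},
    Subtype.val ⁻¹' {δ : RealSpectrum A | -(h - f) ∉ δ.1},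
    (RealSpectrum.isOpen_basic _).preimage continuous_subtype_val,
    (RealSpectrum.isOpen_basic _).preimage continuous_subtype_val, ?_, ?_, ?_⟩
  · show -(f - h) ∉ x.1.1
    rw [neg_sub]
    intro hmem
    have : h ∈ x.1.1 := by
      have := x.1.2.add_mem hmem hf1
      rwa [sub_add_cancel] at this
    exact hh2 this
  · show -(h - f) ∉ y.1.1
    rw [neg_sub]
    intro hmem
    have : f ∈ y.1.1 := by
      have := y.1.2.add_mem hmem hh1
      rwa [sub_add_cancel] at this
    exact hf2 this
  · rw [Set.disjoint_left]
    rintro δ h1 h2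
    rw [Set.mem_preimage, Set.mem_setOf_eq, neg_sub] at h1 h2
    rcases δ.1.2.total (f - h) with hc | hc
    · exact h2 hc
    · rw [neg_sub] at hc; exact h1 hc

end Compactness

section ConeAlgebra

variable {K : Type*} [Field K] [LinearOrder K] [IsStrictOrderedRing K] [IsRealClosedField K]
variable {A : Type*} [CommRing A] [Algebra K A]

lemma scalar_mem (α : RealSpectrum A) {c : K} (hc : 0 ≤ c) :
    algebraMap K A c ∈ α.1 := by
  obtain ⟨d, hd⟩ := IsRealClosedField.isSquare_of_nonneg c hc
  rw [hd, map_mul]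
  exact α.2.sq_mem _

lemma neg_scalar_not_mem (α : RealSpectrum A) {c : K} (hc : 0 < c) :
    -(algebraMap K A c) ∉ α.1 := by
  intro h
  have h2 : algebraMap K A c⁻¹ ∈ α.1 := scalar_mem α (inv_nonneg.mpr hc.le)
  have h3 := α.2.mul_mem h2 h
  rw [mul_neg, ← map_mul, inv_mul_cancel₀ hc.ne', map_one] at h3
  exact α.2.neg_one_not_mem h3

lemma half_mem (K : Type*) {A' : Type*} [Field K] [LinearOrder K] [IsStrictOrderedRing K] [IsRealClosedField K]
    [CommRing A'] [Algebra K A'] (α : RealSpectrum A') {z : A'} (hz : 2 * z ∈ α.1) :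
    z ∈ α.1 := by
  have h := α.2.mul_mem (scalar_mem α (by norm_num : (0:K) ≤ 2⁻¹)) hz
  have e : algebraMap K A' 2⁻¹ * (2 * z) = z := by
    rw [← mul_assoc, show (2 : A') = algebraMap K A' 2 from (map_ofNat _ 2).symm,
      ← map_mul]
    norm_num
  rwa [e] at h

/-- `x` is bounded in absolute value by a positive scalar. -/
def Bnd (K : Type*) [Field K] [LinearOrder K] [IsStrictOrderedRing K] {A : Type*} [CommRing A] [Algebra K A]
    (α : RealSpectrum A) (x : A) : Prop :=
  ∃ c : K, 0 < c ∧ algebraMap K A c - x ∈ α.1 ∧ algebraMap K A c + x ∈ α.1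

lemma Bnd.add {α : RealSpectrum A} {x y : A} (hx : Bnd K α x) (hy : Bnd K α y) :
    Bnd K α (x + y) := by
  obtain ⟨c1, hc1, h11, h12⟩ := hx
  obtain ⟨c2, hc2, h21, h22⟩ := hy
  refine ⟨c1 + c2, by positivity, ?_, ?_⟩
  · have h := α.2.add_mem h11 h21
    have e : algebraMap K A c1 - x + (algebraMap K A c2 - y) =
        algebraMap K A (c1 + c2) - (x + y) := by rw [map_add]; ring
    rwa [e] at h
  · have h := α.2.add_mem h12 h22
    have e : algebraMap K A c1 + x + (algebraMap K A c2 + y) =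
        algebraMap K A (c1 + c2) + (x + y) := by rw [map_add]; ring
    rwa [e] at h

lemma Bnd.mul {α : RealSpectrum A} {x y : A} (hx : Bnd K α x) (hy : Bnd K α y) :
    Bnd K α (x * y) := by
  obtain ⟨c1, hc1, h11, h12⟩ := hx
  obtain ⟨c2, hc2, h21, h22⟩ := hy
  have hmul : algebraMap K A (c1 * c2) = algebraMap K A c1 * algebraMap K A c2 :=
    map_mul _ _ _
  refine ⟨c1 * c2, by positivity, ?_, ?_⟩
  · apply half_mem K α
    have h := α.2.add_mem (α.2.mul_mem h11 h22) (α.2.mul_mem h12 h21)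
    have e : (algebraMap K A c1 - x) * (algebraMap K A c2 + y) +
        (algebraMap K A c1 + x) * (algebraMap K A c2 - y) =
        2 * (algebraMap K A (c1 * c2) - x * y) := by linear_combination -2 * hmul
    rwa [e] at h
  · apply half_mem K α
    have h := α.2.add_mem (α.2.mul_mem h11 h21) (α.2.mul_mem h12 h22)
    have e : (algebraMap K A c1 - x) * (algebraMap K A c2 - y) +
        (algebraMap K A c1 + x) * (algebraMap K A c2 + y) =
        2 * (algebraMap K A (c1 * c2) + x * y) := by linear_combination -2 * hmul
    rwa [e] at h

lemma Bnd.scalar (α : RealSpectrum A) (a : K) : Bnd K α (algebraMap K A a) := by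
  refine ⟨|a| + 1, by positivity, ?_, ?_⟩
  · rw [← map_sub]
    exact scalar_mem α (by have := le_abs_self a; linarith)
  · rw [← map_add]
    exact scalar_mem α (by have := neg_abs_le a; linarith)

lemma abs_le_of_sq_le_aux {α : RealSpectrum A} {d : K} (hd : 0 < d) {x : A}
    (h : algebraMap K A (d * d) - x * x ∈ α.1) :
    algebraMap K A d - x ∈ α.1 := by
  by_contra h1
  have hx : x - algebraMap K A d ∈ α.1 := by
    rcases α.2.total (algebraMap K A d - x) with hc | hc
    · exact absurd hc h1
    · rwa [neg_sub] at hc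
  have hxd2 : x + algebraMap K A d ∈ α.1 := by
    have := α.2.add_mem hx (scalar_mem α (by positivity : (0:K) ≤ d + d))
    have e : x - algebraMap K A d + algebraMap K A (d + d) =
        x + algebraMap K A d := by rw [map_add]; ring
    rwa [e] at this
  have hprod : (x - algebraMap K A d) * (x + algebraMap K A d) ∈ α.1 :=
    α.2.mul_mem hx hxd2
  have hneg : -((x - algebraMap K A d) * (x + algebraMap K A d)) ∈ α.1 := by
    have e : -((x - algebraMap K A d) * (x + algebraMap K A d)) =
        algebraMap K A (d * d) - x * x := by rw [map_mul]; ring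
    rwa [e]
  rcases α.2.prime _ _ hprod hneg with ⟨_, h5⟩ | ⟨_, h5⟩
  · rw [neg_sub] at h5; exact h1 h5
  · have := α.2.add_mem h5 (scalar_mem α (by positivity : (0:K) ≤ d + d))
    have e : -(x + algebraMap K A d) + algebraMap K A (d + d) =
        algebraMap K A d - x := by rw [map_add]; ring
    rw [e] at this
    exact h1 this

lemma abs_le_of_sq_le {α : RealSpectrum A} {d : K} (hd : 0 < d) {x : A}
    (h : algebraMap K A (d * d) - x * x ∈ α.1) :
    algebraMap K A d - x ∈ α.1 ∧ algebraMap K A d + x ∈ α.1 := by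
  refine ⟨abs_le_of_sq_le_aux hd h, ?_⟩
  have h' : algebraMap K A (d * d) - (-x) * (-x) ∈ α.1 := by rwa [neg_mul_neg]
  have := abs_le_of_sq_le_aux hd h'
  rwa [sub_neg_eq_add] at this

/-- `x` is infinitesimal (or zero) with respect to `K` at `α`. -/
def Ninf (K : Type*) [Field K] [LinearOrder K] [IsStrictOrderedRing K] {A : Type*} [CommRing A] [Algebra K A]
    (α : RealSpectrum A) (x : A) : Prop :=
  ∀ c : K, 0 < c → algebraMap K A c + x ∈ α.1 ∧ algebraMap K A c - x ∈ α.1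

lemma Ninf.neg {α : RealSpectrum A} {x : A} (h : Ninf K α x) : Ninf K α (-x) := by
  intro c hc
  obtain ⟨h1, h2⟩ := h c hc
  constructor
  · rwa [← sub_eq_add_neg]
  · rwa [sub_neg_eq_add]

lemma Ninf.mul_left {α : RealSpectrum A} (bd : ∀ z : A, Bnd K α z) {x y : A}
    (hy : Ninf K α y) : Ninf K α (x * y) := by
  obtain ⟨c, hc, h1, h2⟩ := bd x
  intro k hk
  have hkc : 0 < k / c := by positivity
  obtain ⟨hy1, hy2⟩ := hy (k / c) hkc
  have hck : algebraMap K A c * algebraMap K A (k / c) = algebraMap K A k := by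
    rw [← map_mul, mul_div_cancel₀ _ hc.ne']
  constructor
  · apply half_mem K α
    have h := α.2.add_mem (α.2.mul_mem h1 hy2) (α.2.mul_mem h2 hy1)
    have e : (algebraMap K A c - x) * (algebraMap K A (k / c) - y) +
        (algebraMap K A c + x) * (algebraMap K A (k / c) + y) =
        2 * (algebraMap K A k + x * y) := by linear_combination 2 * hck
    rwa [e] at h
  · apply half_mem K α
    have h := α.2.add_mem (α.2.mul_mem h1 hy1) (α.2.mul_mem h2 hy2)
    have e : (algebraMap K A c - x) * (algebraMap K A (k / c) + y) +
        (algebraMap K A c + x) * (algebraMap K A (k / c) - y) =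
        2 * (algebraMap K A k - x * y) := by linear_combination 2 * hck
    rwa [e] at h

end ConeAlgebra

section Beta

variable {K : Type*} [Field K] [LinearOrder K] [IsStrictOrderedRing K] [IsRealClosedField K]
variable {A : Type*} [CommRing A] [Algebra K A]

lemma betaCone_isPrimeCone (α : RealSpectrum A) (bd : ∀ z : A, Bnd K α z) :
    IsPrimeCone {x : A | x ∈ α.1 ∨ Ninf K α x} := by
  have hmix : ∀ x y : A, x ∈ α.1 → Ninf K α y → (x + y) ∈ α.1 ∨ Ninf K α (x + y) := by
    intro x y hx hNy
    rcases α.2.total (x + y) with h | h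
    · exact Or.inl h
    · refine Or.inr fun c hc => ⟨?_, ?_⟩
      · have hh := α.2.add_mem hx (hNy c hc).1
        have e : x + (algebraMap K A c + y) = algebraMap K A c + (x + y) := by ring
        rwa [e] at hh
      · have hh := α.2.add_mem (scalar_mem α hc.le) h
        rwa [← sub_eq_add_neg] at hh
  constructor
  · rintro (h | h)
    · exact α.2.neg_one_not_mem h
    · obtain ⟨h1, _⟩ := h 2⁻¹ (by norm_num)
      have e : algebraMap K A (2⁻¹ : K) + (-1 : A) = -(algebraMap K A 2⁻¹) := by
        calc algebraMap K A (2⁻¹ : K) + (-1 : A)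
            = algebraMap K A (2⁻¹ + (-1)) := by rw [map_add, map_neg, map_one]
          _ = -(algebraMap K A 2⁻¹) := by norm_num
      rw [e] at h1
      exact neg_scalar_not_mem α (by norm_num) h1
  · rintro x y (hx | hx) (hy | hy)
    · exact Or.inl (α.2.add_mem hx hy)
    · exact hmix x y hx hy
    · rw [add_comm]; exact hmix y x hy hx
    · refine Or.inr fun c hc => ⟨?_, ?_⟩
      · have hc2 : 0 < c / 2 := by positivity
        have hh := α.2.add_mem (hx (c/2) hc2).1 (hy (c/2) hc2).1
        have e : algebraMap K A (c/2) + x + (algebraMap K A (c/2) + y) =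
            algebraMap K A c + (x + y) := by
          rw [show (c : K) = c/2 + c/2 by ring, map_add]; ring
        rwa [e] at hh
      · have hc2 : 0 < c / 2 := by positivity
        have hh := α.2.add_mem (hx (c/2) hc2).2 (hy (c/2) hc2).2
        have e : algebraMap K A (c/2) - x + (algebraMap K A (c/2) - y) =
            algebraMap K A c - (x + y) := by
          rw [show (c : K) = c/2 + c/2 by ring, map_add]; ring
        rwa [e] at hh
  · rintro x y (hx | hx) (hy | hy)
    · exact Or.inl (α.2.mul_mem hx hy)
    · exact Or.inr (Ninf.mul_left bd hy)
    · rw [mul_comm]; exact Or.inr (Ninf.mul_left bd hx)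
    · exact Or.inr (Ninf.mul_left bd hy)
  · intro x
    rcases α.2.total x with h | h
    · exact Or.inl (Or.inl h)
    · exact Or.inr (Or.inl h)
  · intro x y hxy hnxy
    by_cases hα : x * y ∈ α.1 ∧ -(x * y) ∈ α.1
    · rcases α.2.prime x y hα.1 hα.2 with ⟨h1, h2⟩ | ⟨h1, h2⟩
      · exact Or.inl ⟨Or.inl h1, Or.inl h2⟩
      · exact Or.inr ⟨Or.inl h1, Or.inl h2⟩
    · have hN : Ninf K α (x * y) := by
        rcases hxy with h | h
        · rcases hnxy with h' | h'
          · exact absurd ⟨h, h'⟩ hα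
          · have := h'.neg
            rwa [neg_neg] at this
        · exact h
      have hNor : Ninf K α x ∨ Ninf K α y := by
        by_contra hcon
        push_neg at hcon
        obtain ⟨hNx, hNy⟩ := hcon
        rw [Ninf] at hNx hNy
        push_neg at hNx hNy
        obtain ⟨c1, hc1, hx1⟩ := hNx
        obtain ⟨c2, hc2, hy1⟩ := hNy
        -- extract x' ∈ {x, -x} with x' - ψ c1 ∈ α
        have hx' : ∃ x' : A, (x' = x ∨ x' = -x) ∧ x' - algebraMap K A c1 ∈ α.1 := by
          by_cases hpx : algebraMap K A c1 + x ∈ α.1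
          · refine ⟨x, Or.inl rfl, ?_⟩
            have hnot : algebraMap K A c1 - x ∉ α.1 := fun hmem => hx1 hpx hmem
            rcases α.2.total (algebraMap K A c1 - x) with hc | hc
            · exact absurd hc hnot
            · rwa [neg_sub] at hc
          · refine ⟨-x, Or.inr rfl, ?_⟩
            rcases α.2.total (algebraMap K A c1 + x) with hc | hc
            · exact absurd hc hpx
            · have e : -(algebraMap K A c1 + x) = -x - algebraMap K A c1 := by ring
              rwa [e] at hc
        have hy' : ∃ y' : A, (y' = y ∨ y' = -y) ∧ y' - algebraMap K A c2 ∈ α.1 := by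
          by_cases hpy : algebraMap K A c2 + y ∈ α.1
          · refine ⟨y, Or.inl rfl, ?_⟩
            have hnot : algebraMap K A c2 - y ∉ α.1 := fun hmem => hy1 hpy hmem
            rcases α.2.total (algebraMap K A c2 - y) with hc | hc
            · exact absurd hc hnot
            · rwa [neg_sub] at hc
          · refine ⟨-y, Or.inr rfl, ?_⟩
            rcases α.2.total (algebraMap K A c2 + y) with hc | hc
            · exact absurd hc hpy
            · have e : -(algebraMap K A c2 + y) = -y - algebraMap K A c2 := by ring
              rwa [e] at hc
        obtain ⟨x', hx'eq, hx'mem⟩ := hx'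
        obtain ⟨y', hy'eq, hy'mem⟩ := hy'
        have hmul : algebraMap K A (c1 * c2) = algebraMap K A c1 * algebraMap K A c2 :=
          map_mul _ _ _
        have hprod : x' * y' - algebraMap K A (c1 * c2) ∈ α.1 := by
          have h1 := α.2.mul_mem hx'mem hy'mem
          have h2 := α.2.mul_mem (scalar_mem α hc1.le) hy'mem
          have h3 := α.2.mul_mem (scalar_mem α hc2.le) hx'mem
          have hsum := α.2.add_mem (α.2.add_mem h1 h2) h3
          have e : (x' - algebraMap K A c1) * (y' - algebraMap K A c2) +
              algebraMap K A c1 * (y' - algebraMap K A c2) +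
              algebraMap K A c2 * (x' - algebraMap K A c1) =
              x' * y' - algebraMap K A (c1 * c2) := by linear_combination hmul
          rwa [e] at hsum
        have hhalf : 0 < c1 * c2 / 2 := by positivity
        have hsmall : algebraMap K A (c1 * c2 / 2) - x' * y' ∈ α.1 := by
          obtain ⟨hplus, hminus⟩ := hN (c1 * c2 / 2) hhalf
          rcases hx'eq with rfl | rfl <;> rcases hy'eq with rfl | rfl
          · exact hminus
          · have e : x' * -y = -(x' * y) := by ring
            rw [e, sub_neg_eq_add]; exact hplus
          · have e : -x * y' = -(x * y') := by ring
            rw [e, sub_neg_eq_add]; exact hplus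
          · have e : -x * -y = x * y := by ring
            rw [e]; exact hminus
        have hfinal := α.2.add_mem hsmall hprod
        have e : algebraMap K A (c1 * c2 / 2) - x' * y' +
            (x' * y' - algebraMap K A (c1 * c2)) =
            -(algebraMap K A (c1 * c2 / 2)) := by
          have : algebraMap K A (c1 * c2) =
              algebraMap K A (c1 * c2 / 2) + algebraMap K A (c1 * c2 / 2) := by
            rw [← map_add]; congr 1; ring
          linear_combination -this
        rw [e] at hfinal
        exact neg_scalar_not_mem α hhalf hfinal
      rcases hNor with h | h
      · exact Or.inl ⟨Or.inr h, Or.inr h.neg⟩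
      · exact Or.inr ⟨Or.inr h, Or.inr h.neg⟩

lemma isArchPoint_of_closed_of_bnd {α : RealSpectrum A}
    (hcl : IsClosed ({α} : Set (RealSpectrum A)))
    (bd : ∀ z : A, Bnd K α z) : RealSpectrum.IsArchPoint K α := by
  intro a b' hb'
  by_contra hno
  push_neg at hno
  -- b'² is infinitesimal
  have hNb2 : Ninf K α (b' * b') := by
    intro c hc
    refine ⟨α.2.add_mem (scalar_mem α hc.le) (α.2.sq_mem b'), ?_⟩
    by_contra hcb
    have hge : b' * b' - algebraMap K A c ∈ α.1 := by
      rcases α.2.total (algebraMap K A c - b' * b') with h | h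
      · exact absurd h hcb
      · rwa [neg_sub] at h
    obtain ⟨c3, hc3, hc31, hc32⟩ := bd (a * b')
    have hk : 0 < (c3 + 1) / c := by positivity
    apply hno ((c3 + 1) / c)
    have hkk : algebraMap K A ((c3 + 1) / c) * algebraMap K A c =
        algebraMap K A c3 + 1 := by
      rw [← map_mul, div_mul_cancel₀ _ hc.ne', map_add, map_one]
    have hid : (algebraMap K A ((c3 + 1) / c) * b' - a) * b' =
        algebraMap K A ((c3 + 1) / c) * (b' * b' - algebraMap K A c) +
        (algebraMap K A c3 - a * b') + 1 := by linear_combination hkk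
    rw [hid]
    exact α.2.add_mem (α.2.add_mem (α.2.mul_mem (scalar_mem α hk.le) hge) hc31)
      α.2.one_mem'
  -- the specialization β
  set βs : Set A := {x : A | x ∈ α.1 ∨ Ninf K α x} with hβs
  have hβ : IsPrimeCone βs := betaCone_isPrimeCone α bd
  have hsub : α.1 ⊆ βs := fun x h => Or.inl h
  have heq : (⟨βs, hβ⟩ : RealSpectrum A) = α :=
    RealSpectrum.eq_of_isClosed_singleton hcl hsub
  have hx0 : -(b' * b') ∈ βs := Or.inr hNb2.neg
  have hx0' : -(b' * b') ∈ α.1 := by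
    have := congrArg Subtype.val heq
    rwa [← this]
  rcases α.2.prime b' b' (α.2.sq_mem b') hx0' with ⟨h1, h2⟩ | ⟨h1, h2⟩ <;>
    exact hb' ⟨h1, h2⟩

end Beta


noncomputable section

variable (L K : Type) [Field L] [LinearOrder L] [IsStrictOrderedRing L] [IsRealClosedField L]
  [Field K] [LinearOrder K] [IsStrictOrderedRing K] [IsRealClosedField K] [Algebra L K]

variable {n : ℕ}

/-- The `K`-points of the algebraic set `V ⊆ Lⁿ` defined by the family of polynomials `B`. -/
def extPoints (B : Set (MvPolynomial (Fin n) L)) : Set (Fin n → K) :=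
  {v | ∀ p ∈ B, MvPolynomial.eval v (MvPolynomial.map (algebraMap L K) p) = 0}

/-- The coordinate ring `K[V]` of the `K`-points of `V`. -/
abbrev coordRing (B : Set (MvPolynomial (Fin n) L)) : Type :=
  MvPolynomial (Fin n) K ⧸ MvPolynomial.vanishingIdeal K (extPoints L K B)

variable (B : Set (MvPolynomial (Fin n) L))

/-- The element `g = Σᵢ xᵢ²` of the coordinate ring. -/
def sumSq : coordRing L K B :=
  Ideal.Quotient.mk _ (∑ i : Fin n, (MvPolynomial.X i) ^ 2)

/-- The constructible set `Ã_k(𝕂)` associated with the open semialgebraic set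
`A_k(𝕂) = {v ∈ V(𝕂) : Σᵢ vᵢ² < b^k}`: the basic open set `Ũ(b^k − Σᵢ xᵢ²)`. -/
def Atilde (b : K) (k : ℕ) : Set (RealSpectrum (coordRing L K B)) :=
  {α | -(algebraMap K (coordRing L K B) (b ^ k) - sumSq L K B) ∉ α.1}

/-- The constructible set `B̃_k(𝕂)` associated with the closed semialgebraic set
`B_k(𝕂) = {v ∈ V(𝕂) : Σᵢ vᵢ² ≤ b^k}`: the set `{α : ρ_α(b^k − Σᵢ xᵢ²) ≥ 0}`. -/
def Btilde (b : K) (k : ℕ) : Set (RealSpectrum (coordRing L K B)) :=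
  {α | (algebraMap K (coordRing L K B) (b ^ k) - sumSq L K B) ∈ α.1}


set_option maxHeartbeats 2000000
set_option synthInstance.maxHeartbeats 1000000

section Specific

private lemma exists_sq_ge {b : K} (hb : ∀ c : K, ∃ k : ℕ, c < b ^ k) (d : K) :
    ∃ e : K, 0 < e ∧ d ≤ e * e := by
  obtain ⟨j, hj⟩ := hb d
  exact ⟨|b ^ j| + 1, by positivity,
    by nlinarith [le_abs_self (b ^ j), abs_nonneg (b ^ j)]⟩

private lemma bnd_all {b : K} (hb : ∀ c : K, ∃ k : ℕ, c < b ^ k)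
    (α : RealSpectrum (coordRing L K B)) (m : ℕ)
    (hm : algebraMap K (coordRing L K B) (b ^ m) - sumSq L K B ∈ α.1) :
    ∀ x : coordRing L K B, Bnd K α x := by
  set ψ := algebraMap K (coordRing L K B) with hψ
  set mk := Ideal.Quotient.mk (MvPolynomial.vanishingIdeal K (extPoints L K B)) with hmk
  have hsumsq : sumSq L K B = ∑ i : Fin n, mk (MvPolynomial.X i) * mk (MvPolynomial.X i) := by
    rw [sumSq, map_sum]
    refine Finset.sum_congr rfl fun i _ => ?_
    rw [map_pow, pow_two]
  have hXi : ∀ i : Fin n, Bnd K α (mk (MvPolynomial.X i)) := by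
    intro i
    have hsub : sumSq L K B - mk (MvPolynomial.X i) * mk (MvPolynomial.X i) ∈ α.1 := by
      have hsum := Finset.sum_erase_add Finset.univ
        (fun j : Fin n => mk (MvPolynomial.X j) * mk (MvPolynomial.X j)) (Finset.mem_univ i)
      have e : sumSq L K B - mk (MvPolynomial.X i) * mk (MvPolynomial.X i) =
          ∑ j ∈ Finset.univ.erase i, mk (MvPolynomial.X j) * mk (MvPolynomial.X j) := by
        rw [hsumsq, ← hsum]; ring
      rw [e]
      exact Finset.sum_induction _ (· ∈ α.1) (fun u v hu hv => α.2.add_mem hu hv)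
        α.2.zero_mem' (fun j _ => α.2.sq_mem _)
    have hbd : ψ (b ^ m) - mk (MvPolynomial.X i) * mk (MvPolynomial.X i) ∈ α.1 := by
      have h := α.2.add_mem hm hsub
      have e : ψ (b ^ m) - sumSq L K B +
          (sumSq L K B - mk (MvPolynomial.X i) * mk (MvPolynomial.X i)) =
          ψ (b ^ m) - mk (MvPolynomial.X i) * mk (MvPolynomial.X i) := by ring
      rwa [e] at h
    obtain ⟨e, he, hee⟩ := exists_sq_ge K hb (b ^ m)
    have hsq : ψ (e * e) - mk (MvPolynomial.X i) * mk (MvPolynomial.X i) ∈ α.1 := by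
      have h1 : ψ (e * e - b ^ m) ∈ α.1 := scalar_mem α (sub_nonneg.mpr hee)
      have h := α.2.add_mem h1 hbd
      have e2 : ψ (e * e - b ^ m) +
          (ψ (b ^ m) - mk (MvPolynomial.X i) * mk (MvPolynomial.X i)) =
          ψ (e * e) - mk (MvPolynomial.X i) * mk (MvPolynomial.X i) := by
        rw [map_sub]; ring
      rwa [e2] at h
    obtain ⟨h1, h2⟩ := abs_le_of_sq_le he hsq
    exact ⟨e, he, h1, h2⟩
  intro x
  obtain ⟨p, rfl⟩ := Ideal.Quotient.mk_surjective x
  induction p using MvPolynomial.induction_on with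
  | C a =>
    have e : (Ideal.Quotient.mk (MvPolynomial.vanishingIdeal K (extPoints L K B)))
        (MvPolynomial.C a) = ψ a := by
      rw [show (MvPolynomial.C a : MvPolynomial (Fin n) K) =
        algebraMap K (MvPolynomial (Fin n) K) a from rfl, Ideal.Quotient.mk_algebraMap]
    rw [e]
    exact Bnd.scalar α a
  | add p q hp hq => rw [map_add]; exact hp.add hq
  | mul_X p i hp => rw [map_mul]; exact hp.mul (hXi i)

private lemma arch_mem_atilde {b : K} (hb : ∀ c : K, ∃ k : ℕ, c < b ^ k)
    (α : RealSpectrum (coordRing L K B)) (hA : RealSpectrum.IsArchPoint K α) :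
    ∃ m : ℕ, α ∈ Atilde L K B b m := by
  set ψ := algebraMap K (coordRing L K B) with hψ
  have h1 : ¬((1 : coordRing L K B) ∈ α.1 ∧ -(1 : coordRing L K B) ∈ α.1) := by
    rintro ⟨_, h⟩; exact α.2.neg_one_not_mem h
  obtain ⟨k, hk⟩ := hA (sumSq L K B) 1 h1
  rw [mul_one, mul_one] at hk
  obtain ⟨m, hm⟩ := hb k
  refine ⟨m, ?_⟩
  show -(ψ (b ^ m) - sumSq L K B) ∉ α.1
  intro hneg
  have h4 : -(ψ (b ^ m - k)) ∈ α.1 := by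
    have h := α.2.add_mem hneg hk
    have e : -(ψ (b ^ m) - sumSq L K B) + (ψ k - sumSq L K B) = -(ψ (b ^ m - k)) := by
      rw [map_sub]; ring
    rwa [e] at h
  exact neg_scalar_not_mem α (sub_pos.mpr hm) h4

private lemma atilde_sub_btilde (b : K) (m : ℕ) :
    Atilde L K B b m ⊆ Btilde L K B b m := by
  intro α h
  rcases α.2.total (algebraMap K (coordRing L K B) (b ^ m) - sumSq L K B) with hc | hc
  · exact hc
  · exact absurd hc h

end Specific

set_option maxHeartbeats 2000000
set_option synthInstance.maxHeartbeats 1000000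

/-- **The Archimedean spectrum is open and σ-compact in the real spectrum
compactification.**
Let `𝕃` be a real closed field, `𝕂 ⊇ 𝕃` a real closed field containing a big element `b`,
and `V ⊆ 𝕃ⁿ` an algebraic set.  Then the Archimedean spectrum `Spec_arch(V(𝕂))` is an open
subset of the space `RSp(V(𝕂))` of closed points of the real spectrum, and it is a
countable union of compact subsets of `RSp(V(𝕂))`; concretely, with
`A_k(𝕂) = {v : Σᵢ vᵢ² < b^k}` and `B_k(𝕂) = {v : Σᵢ vᵢ² ≤ b^k}` one has
`Spec_arch(V(𝕂)) = ⋃ₖ Ã_k(𝕂) ∩ RSp(V(𝕂)) = ⋃ₖ B̃_k(𝕂) ∩ RSp(V(𝕂))`.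
In particular `Spec_arch(V(𝕂))` is σ-compact and locally compact. -/


theorem archSpectrum_open_sigmaCompact
    (b : K) (hb : ∀ c : K, ∃ k : ℕ, c < b ^ k)
    (ArchS : Set {α : RealSpectrum (coordRing L K B) //
      IsClosed ({α} : Set (RealSpectrum (coordRing L K B)))})
    (hArch : ArchS = {x | RealSpectrum.IsArchPoint K x.1}) :
    IsOpen ArchS ∧
      ArchS = ⋃ k : ℕ, {x | x.1 ∈ Atilde L K B b k} ∧
      ArchS = ⋃ k : ℕ, {x | x.1 ∈ Btilde L K B b k} ∧
      (∀ k : ℕ, IsCompact ({x | x.1 ∈ Btilde L K B b k} :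
        Set {α : RealSpectrum (coordRing L K B) //
          IsClosed ({α} : Set (RealSpectrum (coordRing L K B)))})) ∧
      SigmaCompactSpace ↥ArchS ∧ LocallyCompactSpace ↥ArchS := by
  classical
  haveI hYcomp : CompactSpace {α : RealSpectrum (coordRing L K B) //
      IsClosed ({α} : Set (RealSpectrum (coordRing L K B)))} :=
    RealSpectrum.compactSpace_closedPoints
  haveI hYt2 : T2Space {α : RealSpectrum (coordRing L K B) //
      IsClosed ({α} : Set (RealSpectrum (coordRing L K B)))} :=
    RealSpectrum.t2_closedPoints
  have hAeq : ArchS = ⋃ k : ℕ, {x | x.1 ∈ Atilde L K B b k} := by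
    rw [hArch]
    ext x
    simp only [Set.mem_iUnion, Set.mem_setOf_eq]
    constructor
    · intro h
      exact arch_mem_atilde L K B hb x.1 h
    · rintro ⟨k, hk⟩
      exact isArchPoint_of_closed_of_bnd x.2
        (bnd_all L K B hb x.1 k (atilde_sub_btilde L K B b k hk))
  have hBeq : ArchS = ⋃ k : ℕ, {x | x.1 ∈ Btilde L K B b k} := by
    rw [hArch]
    ext x
    simp only [Set.mem_iUnion, Set.mem_setOf_eq]
    constructor
    · intro h
      obtain ⟨k, hk⟩ := arch_mem_atilde L K B hb x.1 h
      exact ⟨k, atilde_sub_btilde L K B b k hk⟩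
    · rintro ⟨k, hk⟩
      exact isArchPoint_of_closed_of_bnd x.2 (bnd_all L K B hb x.1 k hk)
  have hAopen : ∀ k : ℕ, IsOpen (Atilde L K B b k) := fun k =>
    RealSpectrum.isOpen_basic (algebraMap K (coordRing L K B) (b ^ k) - sumSq L K B)
  have hopen : IsOpen ArchS := by
    rw [hAeq]
    exact isOpen_iUnion fun k => (hAopen k).preimage continuous_subtype_val
  have hBclosed : ∀ k : ℕ, IsClosed (Btilde L K B b k) := by
    intro k
    rw [← isOpen_compl_iff]
    have e : (Btilde L K B b k)ᶜ =
        {α : RealSpectrum (coordRing L K B) |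
          -(-(algebraMap K (coordRing L K B) (b ^ k) - sumSq L K B)) ∉ α.1} := by
      ext α
      simp only [Btilde, Set.mem_compl_iff, Set.mem_setOf_eq, neg_neg]
    rw [e]
    exact RealSpectrum.isOpen_basic _
  have hcomp : ∀ k : ℕ, IsCompact ({x | x.1 ∈ Btilde L K B b k} :
      Set {α : RealSpectrum (coordRing L K B) //
        IsClosed ({α} : Set (RealSpectrum (coordRing L K B)))}) := fun k =>
    ((hBclosed k).preimage continuous_subtype_val).isCompact
  have hBsub : ∀ k : ℕ, ({x | x.1 ∈ Btilde L K B b k} :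
      Set {α : RealSpectrum (coordRing L K B) //
        IsClosed ({α} : Set (RealSpectrum (coordRing L K B)))}) ⊆ ArchS := by
    intro k x hx
    rw [hBeq]
    exact Set.mem_iUnion.mpr ⟨k, hx⟩
  have hsigma : SigmaCompactSpace ↥ArchS := by
    refine ⟨⟨fun k => Subtype.val ⁻¹' {x | x.1 ∈ Btilde L K B b k}, fun k => ?_, ?_⟩⟩
    · rw [Topology.IsEmbedding.subtypeVal.isCompact_iff, Set.image_preimage_eq_inter_range,
        Subtype.range_coe]
      rw [Set.inter_eq_left.mpr (hBsub k)]
      exact hcomp k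
    · have hmem : ∀ y, y ∈ ArchS → ∃ k : ℕ, y ∈ ({x | x.1 ∈ Btilde L K B b k} :
          Set {α : RealSpectrum (coordRing L K B) //
            IsClosed ({α} : Set (RealSpectrum (coordRing L K B)))}) := by
        intro y hy
        rw [hBeq] at hy
        exact Set.mem_iUnion.mp hy
      ext x
      simp only [Set.mem_iUnion, Set.mem_preimage, Set.mem_univ, iff_true]
      exact hmem x.1 x.2
  have hlc : LocallyCompactSpace ↥ArchS := hopen.locallyCompactSpace
  exact ⟨hopen, hAeq, hBeq, hcomp, hsigma, hlc⟩

end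
end

section
/- Let 𝕂 be a real closed field with a nontrivial non-Archimedean absolute value compatible with the order, and A a 𝕂-algebra. Then the image T of the canonical map ψ : Spec_arch(A) → M(A) is a closed subset of the Berkovich analytification M(A). -/
noncomputable section

variable (𝕂 : Type) [Field 𝕂] [LinearOrder 𝕂] [IsStrictOrderedRing 𝕂] [IsRealClosedField 𝕂]

/-- A non-Archimedean absolute value on an ordered field, compatible with the order. -/
structure IsNonarchAbsValue (v : 𝕂 → ℝ) : Prop where
  nonneg : ∀ k, 0 ≤ v k
  eq_zero_iff : ∀ k, v k = 0 ↔ k = 0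
  map_mul : ∀ h k, v (h * k) = v h * v k
  nonarch : ∀ h k, v (h + k) ≤ max (v h) (v k)
  mono : ∀ h k : 𝕂, 0 ≤ h → h ≤ k → v h ≤ v k

variable (A : Type) [CommRing A] [Algebra 𝕂 A]

/-- A multiplicative seminorm on a `𝕂`-algebra `A` (a point of the Berkovich
analytification `M(A)`). -/
structure IsMultSeminorm (v : 𝕂 → ℝ) (η : A → ℝ) : Prop where
  nonneg : ∀ f, 0 ≤ η f
  map_algebraMap : ∀ k : 𝕂, η (algebraMap 𝕂 A k) = v k
  map_mul : ∀ f g, η (f * g) = η f * η g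
  add_le : ∀ f g, η (f + g) ≤ max (η f) (η g)

/-- The canonical map `ψ : Spec_arch(A) → M(A)`:
`ψ(α)(f) = |f̄|_α = sup { |k|_𝕂 : k ∈ 𝕂_{≥0}, k ≤_α |f̄| }`
(equivalently `k² ≤_α f²`), where `α` is a prime cone of `A`. -/
def psiFun (v : 𝕂 → ℝ) (α : RealSpectrum A) : A → ℝ :=
  fun f => sSup {r : ℝ | ∃ k : 𝕂, 0 ≤ k ∧
    (f * f - algebraMap 𝕂 A (k * k)) ∈ α.1 ∧ r = v k}

set_option linter.unusedSectionVars false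
set_option maxHeartbeats 1000000

namespace RCFaux
variable {𝕂} {A}

variable {v : 𝕂 → ℝ}

lemma v_zero (hv : IsNonarchAbsValue 𝕂 v) : v 0 = 0 := (hv.eq_zero_iff 0).mpr rfl

lemma v_one (hv : IsNonarchAbsValue 𝕂 v) : v 1 = 1 := by
  have h := hv.map_mul 1 1
  rw [one_mul] at h
  have h1 : v 1 ≠ 0 := fun h0 => one_ne_zero ((hv.eq_zero_iff 1).mp h0)
  have := mul_left_cancel₀ h1 (show v 1 * 1 = v 1 * v 1 by linarith)
  linarith

lemma v_neg (hv : IsNonarchAbsValue 𝕂 v) (k : 𝕂) : v (-k) = v k := by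
  have h : v (-k) * v (-k) = v k * v k := by
    rw [← hv.map_mul, ← hv.map_mul, neg_mul_neg]
  nlinarith [hv.nonneg k, hv.nonneg (-k)]

lemma v_pos (hv : IsNonarchAbsValue 𝕂 v) {k : 𝕂} (hk : k ≠ 0) : 0 < v k :=
  lt_of_le_of_ne (hv.nonneg k) (fun h => hk ((hv.eq_zero_iff k).mp h.symm))

lemma v_inv (hv : IsNonarchAbsValue 𝕂 v) {k : 𝕂} (hk : k ≠ 0) : v k⁻¹ = (v k)⁻¹ :=
  eq_inv_of_mul_eq_one_left (by rw [← hv.map_mul, inv_mul_cancel₀ hk, v_one hv])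

lemma v_pow (hv : IsNonarchAbsValue 𝕂 v) (k : 𝕂) (n : ℕ) : v (k ^ n) = v k ^ n := by
  induction n with
  | zero => simpa using v_one hv
  | succ n ih => rw [pow_succ, pow_succ, hv.map_mul, ih]

lemma v_sqrt (hv : IsNonarchAbsValue 𝕂 v) {k : 𝕂} (hk : k ≠ 0) :
    ∃ c : 𝕂, c ≠ 0 ∧ v c * v c = v k := by
  rcases le_total 0 k with h | h
  · obtain ⟨c, hc⟩ := IsRealClosedField.isSquare_of_nonneg k h
    refine ⟨c, ?_, by rw [← hv.map_mul, ← hc]⟩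
    rintro rfl; rw [mul_zero] at hc; exact hk hc
  · obtain ⟨c, hc⟩ := IsRealClosedField.isSquare_of_nonneg (-k) (by linarith)
    refine ⟨c, ?_, by rw [← hv.map_mul, ← hc, v_neg hv]⟩
    rintro rfl; rw [mul_zero] at hc; apply hk; linarith

lemma v_sqrt_iter (hv : IsNonarchAbsValue 𝕂 v) (n : ℕ) {k : 𝕂} (hk : k ≠ 0) :
    ∃ c : 𝕂, c ≠ 0 ∧ v c ^ (2 ^ n) = v k := by
  induction n generalizing k with
  | zero => exact ⟨k, hk, by simp⟩
  | succ n ih =>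
    obtain ⟨c, hc, hvc⟩ := v_sqrt hv hk
    obtain ⟨d, hd, hvd⟩ := ih hc
    exact ⟨d, hd, by rw [pow_succ, pow_mul, hvd, sq, hvc]⟩

lemma exists_v_gt_one (hv : IsNonarchAbsValue 𝕂 v) (hnt : ∃ k : 𝕂, k ≠ 0 ∧ v k ≠ 1) :
    ∃ k : 𝕂, k ≠ 0 ∧ 1 < v k := by
  obtain ⟨k, hk, hvk⟩ := hnt
  rcases lt_or_gt_of_ne hvk with h | h
  · refine ⟨k⁻¹, inv_ne_zero hk, ?_⟩
    rw [v_inv hv hk]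
    exact (one_lt_inv₀ (v_pos hv hk)).mpr h
  · exact ⟨k, hk, h⟩

lemma v_unbdd (hv : IsNonarchAbsValue 𝕂 v) (hnt : ∃ k : 𝕂, k ≠ 0 ∧ v k ≠ 1) (R : ℝ) :
    ∃ k : 𝕂, 0 ≤ k ∧ R < v k := by
  obtain ⟨k, hk, hvk⟩ := exists_v_gt_one hv hnt
  obtain ⟨n, hn⟩ := pow_unbounded_of_one_lt R hvk
  rcases le_total 0 (k ^ n) with h | h
  · exact ⟨k ^ n, h, by rwa [v_pow hv]⟩
  · exact ⟨-k ^ n, by linarith, by rwa [v_neg hv, v_pow hv]⟩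

lemma v_dense (hv : IsNonarchAbsValue 𝕂 v) (hnt : ∃ k : 𝕂, k ≠ 0 ∧ v k ≠ 1)
    {a b : ℝ} (ha : 0 < a) (hab : a < b) :
    ∃ k : 𝕂, 0 ≤ k ∧ a < v k ∧ v k < b := by
  obtain ⟨k₁, hk₁, hvk₁⟩ := exists_v_gt_one hv hnt
  have hba : 1 < b / a := (one_lt_div ha).mpr hab
  obtain ⟨n, hn⟩ := pow_unbounded_of_one_lt (v k₁) hba
  have hn2 : v k₁ < (b / a) ^ (2 ^ n) :=
    lt_of_lt_of_le hn (pow_le_pow_right₀ (le_of_lt hba) (Nat.lt_two_pow_self (n := n)).le)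
  obtain ⟨c, hc, hvc⟩ := v_sqrt_iter hv n hk₁
  have hc1 : 1 < v c := by
    by_contra h
    push_neg at h
    have : v c ^ (2 ^ n) ≤ 1 := pow_le_one₀ (hv.nonneg c) h
    rw [hvc] at this; linarith
  have hcb : v c < b / a := by
    by_contra h
    push_neg at h
    have : (b / a) ^ (2 ^ n) ≤ v c ^ (2 ^ n) := pow_le_pow_left₀ (by positivity) h _
    rw [hvc] at this; linarith
  obtain ⟨m, hm1, hm2⟩ := exists_mem_Ioc_zpow ha hc1
  have hvzpow : ∀ j : ℤ, ∃ k : 𝕂, 0 ≤ k ∧ v k = v c ^ j := by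
    intro j
    have key : ∀ k : 𝕂, k ≠ 0 → v (k ^ j) = v k ^ j := by
      intro k hk0
      rcases j with j | j
      · simpa using v_pow hv k j
      · simp only [zpow_negSucc]
        rw [v_inv hv (pow_ne_zero _ hk0), v_pow hv]
    rcases le_total 0 (c ^ j) with h | h
    · exact ⟨c ^ j, h, key c hc⟩
    · exact ⟨-c ^ j, by linarith, by rw [v_neg hv]; exact key c hc⟩
  have hw0 : v c ≠ 0 := by positivity
  have hwpos : (0:ℝ) < v c := by positivity
  rcases eq_or_lt_of_le hm2 with heq | hlt
  · obtain ⟨k, hk0, hvk⟩ := hvzpow (m + 2)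
    have hrw : v c ^ (m + 2) = v c ^ (m + 1) * v c := by
      rw [show m + 2 = (m + 1) + 1 by ring, zpow_add_one₀ hw0]
    refine ⟨k, hk0, ?_, ?_⟩
    · rw [hvk, hrw, ← heq]; nlinarith
    · rw [hvk, hrw, ← heq]
      calc a * v c < (b / a) * a := by nlinarith
        _ = b := by field_simp
  · obtain ⟨k, hk0, hvk⟩ := hvzpow (m + 1)
    refine ⟨k, hk0, by rwa [hvk], ?_⟩
    rw [hvk, zpow_add_one₀ hw0]
    calc v c ^ m * v c < a * v c := by nlinarith [zpow_pos hwpos m]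
      _ < (b / a) * a := by nlinarith
      _ = b := by field_simp

/-! ### Prime cone lemmas -/

lemma sq_mem (α : RealSpectrum A) (x : A) : x * x ∈ α.1 := by
  rcases α.2.total x with h | h
  · exact α.2.mul_mem h h
  · have := α.2.mul_mem h h
    rwa [neg_mul_neg] at this

lemma zero_mem (α : RealSpectrum A) : (0 : A) ∈ α.1 := by
  have := sq_mem α 0
  rwa [mul_zero] at this

lemma one_mem (α : RealSpectrum A) : (1 : A) ∈ α.1 := by
  have := sq_mem α 1
  rwa [mul_one] at this

lemma listsum_mem (α : RealSpectrum A) (l : List A) (h : ∀ x ∈ l, x ∈ α.1) :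
    l.sum ∈ α.1 := by
  induction l with
  | nil => exact zero_mem α
  | cons x l ih =>
    rw [List.sum_cons]
    exact α.2.add_mem (h x (List.mem_cons_self (a := x) (l := l))) (ih fun y hy => h y (List.mem_cons_of_mem x hy))

lemma algebraMap_mem_iff (α : RealSpectrum A) (k : 𝕂) :
    algebraMap 𝕂 A k ∈ α.1 ↔ 0 ≤ k := by
  constructor
  · intro hmem
    by_contra hk
    push_neg at hk
    obtain ⟨c, hc⟩ := IsRealClosedField.isSquare_of_nonneg (-k) (by linarith)
    have hmemneg : algebraMap 𝕂 A (-k) ∈ α.1 := by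
      rw [hc, map_mul]
      exact sq_mem α _
    have hy : algebraMap 𝕂 A (1/k) * algebraMap 𝕂 A (1/k) ∈ α.1 := sq_mem α _
    have hk0 : k ≠ 0 := ne_of_lt hk
    have : (-1 : A) ∈ α.1 := by
      have hmul := α.2.mul_mem (α.2.mul_mem hmem hmemneg) hy
      have : algebraMap 𝕂 A k * algebraMap 𝕂 A (-k) * (algebraMap 𝕂 A (1/k) * algebraMap 𝕂 A (1/k))
          = (-1 : A) := by
        rw [← map_mul, ← map_mul, ← map_mul]
        rw [show k * -k * (1/k * (1/k)) = -1 by field_simp]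
        simp
      rwa [this] at hmul
    exact α.2.neg_one_not_mem this
  · intro hk
    obtain ⟨c, hc⟩ := IsRealClosedField.isSquare_of_nonneg k hk
    rw [hc, map_mul]
    exact sq_mem α _

/-- Forward direction: `ψ(α)` does not decrease when a sum of squares is added
to a square. -/
lemma forward (v : 𝕂 → ℝ) (hv : IsNonarchAbsValue 𝕂 v) (α : RealSpectrum A)
    (hα : RealSpectrum.IsArchPoint 𝕂 α) (g : A) (l : List A)
    (hl : ∀ x ∈ l, ∃ y, x = y * y) :
    psiFun 𝕂 A v α (g * g) ≤ psiFun 𝕂 A v α (g * g + l.sum) := by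
  set S := l.sum with hS
  have hSmem : S ∈ α.1 := listsum_mem α l (fun x hx => by
    obtain ⟨y, hy⟩ := hl x hx; rw [hy]; exact sq_mem α y)
  set f := g * g + S with hf
  have hfmem : f ∈ α.1 := α.2.add_mem (sq_mem α g) hSmem
  -- the arch bound
  obtain ⟨k₀, hk₀⟩ := hα f 1 (fun ⟨_, h⟩ => α.2.neg_one_not_mem h)
  rw [mul_one, mul_one] at hk₀
  have halg : algebraMap 𝕂 A k₀ ∈ α.1 := by
    have := α.2.add_mem hk₀ hfmem
    rwa [sub_add_cancel] at this
  have hk₀0 : 0 ≤ k₀ := (algebraMap_mem_iff α k₀).mp halg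
  have hbdd : BddAbove {r : ℝ | ∃ k : 𝕂, 0 ≤ k ∧
      (f * f - algebraMap 𝕂 A (k * k)) ∈ α.1 ∧ r = v k} := by
    refine ⟨v k₀, ?_⟩
    rintro r ⟨k, hk0, hmem, rfl⟩
    have hsum : algebraMap 𝕂 A k₀ + f ∈ α.1 := by
      have := α.2.add_mem (α.2.add_mem hk₀ hfmem) hfmem
      rwa [sub_add_cancel] at this
    have h1 : algebraMap 𝕂 A (k₀ * k₀) - f * f ∈ α.1 := by
      have := α.2.mul_mem hk₀ hsum
      have heq : (algebraMap 𝕂 A k₀ - f) * (algebraMap 𝕂 A k₀ + f)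
          = algebraMap 𝕂 A (k₀ * k₀) - f * f := by
        rw [map_mul]; ring
      rwa [heq] at this
    have h2 : algebraMap 𝕂 A (k₀ * k₀ - k * k) ∈ α.1 := by
      have := α.2.add_mem h1 hmem
      rwa [sub_add_sub_cancel, ← map_sub] at this
    have h3 : k * k ≤ k₀ * k₀ := by
      have := (algebraMap_mem_iff α _).mp h2
      linarith
    have h4 : k ≤ k₀ := by nlinarith
    exact hv.mono k k₀ hk0 h4
  apply csSup_le_csSup hbdd
  · -- nonempty
    refine ⟨v 0, 0, le_refl 0, ?_, rfl⟩
    rw [mul_zero, map_zero, sub_zero]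
    exact sq_mem α (g * g)
  · -- subset
    rintro r ⟨k, hk0, hmem, rfl⟩
    refine ⟨k, hk0, ?_, rfl⟩
    have hmid : f * f - (g * g) * (g * g) ∈ α.1 := by
      have h1 : (g * g) * S ∈ α.1 := α.2.mul_mem (sq_mem α g) hSmem
      have h2 : S * S ∈ α.1 := α.2.mul_mem hSmem hSmem
      have := α.2.add_mem (α.2.add_mem h1 h1) h2
      have heq : g * g * S + g * g * S + S * S = f * f - g * g * (g * g) := by
        rw [hf]; ring
      rwa [heq] at this
    have := α.2.add_mem hmid hmem
    rwa [sub_add_sub_cancel] at this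

set_option maxHeartbeats 2000000 in
/-- Backward direction: a multiplicative seminorm in which sums of squares do not
cancel comes from an Archimedean point of the real spectrum. -/
lemma backward (v : 𝕂 → ℝ) (hv : IsNonarchAbsValue 𝕂 v) (hnt : ∃ k : 𝕂, k ≠ 0 ∧ v k ≠ 1)
    (η : A → ℝ) (hη : IsMultSeminorm 𝕂 A v η)
    (hC : ∀ (g : A) (l : List A), (∀ x ∈ l, ∃ y, x = y * y) → η (g * g) ≤ η (g * g + l.sum)) :
    ∃ α : RealSpectrum A, RealSpectrum.IsArchPoint 𝕂 α ∧ η = psiFun 𝕂 A v α := by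
  classical
  -- basic facts about η
  have hη0 : η 0 = 0 := by
    have := hη.map_algebraMap 0
    rwa [map_zero, v_zero hv] at this
  have hη1 : η 1 = 1 := by
    have := hη.map_algebraMap 1
    rwa [map_one, v_one hv] at this
  have hηneg : ∀ f : A, η (-f) = η f := by
    intro f
    have h : η (-f) * η (-f) = η f * η f := by
      rw [← hη.map_mul, ← hη.map_mul, neg_mul_neg]
    nlinarith [hη.nonneg f, hη.nonneg (-f)]
  have hηsub : ∀ f g : A, η (f - g) = 0 → η f = η g := by
    intro f g h
    apply le_antisymm
    · have := hη.add_le g (f - g)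
      rw [add_sub_cancel, h] at this
      exact le_trans this (by simp [hη.nonneg g])
    · have h' : η (g - f) = 0 := by rw [show g - f = -(f - g) by ring, hηneg, h]
      have := hη.add_le f (g - f)
      rw [add_sub_cancel, h'] at this
      exact le_trans this (by simp [hη.nonneg f])
  -- the kernel ideal
  let p : Ideal A :=
    { carrier := {f : A | η f = 0}
      add_mem' := by
        intro a b ha hb
        simp only [Set.mem_setOf_eq] at *
        have := hη.add_le a b
        rw [ha, hb] at this
        exact le_antisymm (by simpa using this) (hη.nonneg _)
      zero_mem' := hη0
      smul_mem' := by
        intro c f hf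
        simp only [Set.mem_setOf_eq, smul_eq_mul] at *
        rw [hη.map_mul, hf, mul_zero] }
  have hpmem : ∀ f : A, f ∈ p ↔ η f = 0 := fun f => Iff.rfl
  haveI hp : p.IsPrime := by
    constructor
    · intro h
      rw [Ideal.eq_top_iff_one] at h
      rw [hpmem, hη1] at h
      exact one_ne_zero h
    · intro x y hxy
      rw [hpmem, hη.map_mul] at hxy
      rcases mul_eq_zero.mp hxy with h | h
      · exact Or.inl h
      · exact Or.inr h
  let L := FractionRing (A ⧸ p)
  let φ : A →+* L := (algebraMap (A ⧸ p) L).comp (Ideal.Quotient.mk p)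
  have hφ0 : ∀ a : A, φ a = 0 ↔ η a = 0 := by
    intro a
    rw [show φ a = algebraMap (A ⧸ p) L (Ideal.Quotient.mk p a) from rfl,
      map_eq_zero_iff _ (IsFractionRing.injective (A ⧸ p) L),
      Ideal.Quotient.eq_zero_iff_mem]
    exact hpmem a
  have hrep : ∀ x : L, ∃ a b : A, φ b ≠ 0 ∧ x * φ b = φ a := by
    intro x
    obtain ⟨y, z, hz, hyz⟩ := IsFractionRing.div_surjective (A := A ⧸ p) x
    obtain ⟨a, rfl⟩ := Ideal.Quotient.mk_surjective y
    obtain ⟨b, rfl⟩ := Ideal.Quotient.mk_surjective z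
    have hb : Ideal.Quotient.mk p b ≠ 0 := nonZeroDivisors.ne_zero hz
    have hb0 : algebraMap (A ⧸ p) L (Ideal.Quotient.mk p b) ≠ 0 :=
      fun h => hb (IsFractionRing.injective (A ⧸ p) L (by rw [map_zero]; exact h))
    refine ⟨a, b, ?_, ?_⟩
    · show algebraMap (A ⧸ p) L (Ideal.Quotient.mk p b) ≠ 0
      exact hb0
    · show x * algebraMap (A ⧸ p) L (Ideal.Quotient.mk p b)
        = algebraMap (A ⧸ p) L (Ideal.Quotient.mk p a)
      rw [← hyz, div_mul_cancel₀ _ hb0]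
  choose nmA dnA hdn hnd using hrep
  let nm : L → ℝ := fun x => η (nmA x) / η (dnA x)
  have hnmdef : ∀ x : L, nm x = η (nmA x) / η (dnA x) := fun _ => rfl
  have hφker : ∀ a b : A, φ a = φ b → η a = η b := by
    intro a b h
    apply hηsub
    rw [← hφ0, map_sub, h, sub_self]
  have hηd : ∀ x : L, 0 < η (dnA x) := by
    intro x
    rcases lt_or_eq_of_le (hη.nonneg (dnA x)) with h | h
    · exact h
    · exact absurd ((hφ0 _).mpr h.symm) (hdn x)
  have hnm_eq : ∀ (x : L) (a b : A), φ b ≠ 0 → x * φ b = φ a → nm x = η a / η b := by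
    intro x a b hb hx
    have h1 : φ (a * dnA x) = φ (nmA x * b) := by
      rw [map_mul, map_mul, ← hnd x, ← hx]; ring
    have h2 : η a * η (dnA x) = η (nmA x) * η b := by
      rw [← hη.map_mul, ← hη.map_mul]; exact hφker _ _ h1
    have hbn : 0 < η b := by
      rcases lt_or_eq_of_le (hη.nonneg b) with h | h
      · exact h
      · exact absurd ((hφ0 _).mpr h.symm) hb
    rw [hnmdef, div_eq_div_iff (hηd x).ne' hbn.ne']
    linarith [h2]
  have hnm_phi : ∀ a : A, nm (φ a) = η a := by
    intro a
    rw [hnm_eq (φ a) a 1 (by rw [map_one]; exact one_ne_zero) (by rw [map_one, mul_one]),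
      hη1, div_one]
  have hnm_mul : ∀ x y : L, nm (x * y) = nm x * nm y := by
    intro x y
    have heq : (x * y) * φ (dnA x * dnA y) = φ (nmA x * nmA y) := by
      rw [map_mul, map_mul, show x * y * (φ (dnA x) * φ (dnA y))
        = (x * φ (dnA x)) * (y * φ (dnA y)) by ring, hnd, hnd]
    rw [hnm_eq _ _ _ (by rw [map_mul]; exact mul_ne_zero (hdn x) (hdn y)) heq,
      hη.map_mul, hη.map_mul, hnmdef, hnmdef]
    rw [div_mul_div_comm]
  have hnm_nonneg : ∀ x : L, 0 ≤ nm x := fun x => div_nonneg (hη.nonneg _) (hη.nonneg _)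
  have hnm_zero : ∀ x : L, nm x = 0 ↔ x = 0 := by
    intro x
    constructor
    · intro h
      rw [hnmdef] at h
      have hn : η (nmA x) = 0 := by
        rcases div_eq_zero_iff.mp h with h' | h'
        · exact h'
        · exact absurd h' (ne_of_gt (hηd x))
      have h1 : x * φ (dnA x) = 0 := by rw [hnd x]; exact (hφ0 _).mpr hn
      rcases mul_eq_zero.mp h1 with h' | h'
      · exact h'
      · exact absurd h' (hdn x)
    · rintro rfl
      have h0 : φ (nmA (0 : L)) = 0 := by rw [← hnd (0 : L), zero_mul]
      rw [hnmdef, (hφ0 _).mp h0, zero_div]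
  have hnm_one : nm 1 = 1 := by
    have := hnm_phi 1
    rwa [map_one, hη1] at this
  have hnm_neg : ∀ x : L, nm (-x) = nm x := by
    intro x
    have h : nm (-x) * nm (-x) = nm x * nm x := by
      rw [← hnm_mul, ← hnm_mul, neg_mul_neg]
    nlinarith [hnm_nonneg x, hnm_nonneg (-x)]
  have hnm_inv : ∀ x : L, x ≠ 0 → nm x⁻¹ = (nm x)⁻¹ := by
    intro x hx
    exact eq_inv_of_mul_eq_one_left (by rw [← hnm_mul, inv_mul_cancel₀ hx, hnm_one])
  have hnm_add : ∀ x y : L, nm (x + y) ≤ max (nm x) (nm y) := by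
    intro x y
    have heq : (x + y) * φ (dnA x * dnA y) = φ (nmA x * dnA y + nmA y * dnA x) := by
      rw [map_mul, map_add, map_mul, map_mul, ← hnd x, ← hnd y]; ring
    rw [hnm_eq _ _ _ (by rw [map_mul]; exact mul_ne_zero (hdn x) (hdn y)) heq]
    have hD : 0 < η (dnA x * dnA y) := by
      rw [hη.map_mul]; exact mul_pos (hηd x) (hηd y)
    have hle := hη.add_le (nmA x * dnA y) (nmA y * dnA x)
    have h1 : η (nmA x * dnA y) / η (dnA x * dnA y) = nm x := by
      rw [hη.map_mul, hη.map_mul, hnmdef]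
      rw [div_eq_div_iff (mul_pos (hηd x) (hηd y)).ne' (hηd x).ne']
      ring
    have h2 : η (nmA y * dnA x) / η (dnA x * dnA y) = nm y := by
      rw [hη.map_mul, hη.map_mul, hnmdef]
      rw [div_eq_div_iff (mul_pos (hηd x) (hηd y)).ne' (hηd y).ne']
      ring
    rcases le_total (η (nmA x * dnA y)) (η (nmA y * dnA x)) with h | h
    · rw [max_eq_right h] at hle
      refine le_trans ((div_le_div_iff_of_pos_right hD).mpr hle) ?_
      rw [h2]; exact le_max_right _ _
    · rw [max_eq_left h] at hle
      refine le_trans ((div_le_div_iff_of_pos_right hD).mpr hle) ?_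
      rw [h1]; exact le_max_left _ _
  -- bound for sums
  have hnm_listsum : ∀ (l : List L) (c : ℝ), 0 ≤ c → (∀ x ∈ l, nm x ≤ c) → nm l.sum ≤ c := by
    intro l
    induction l with
    | nil => intro c hc _; rw [List.sum_nil, (hnm_zero 0).mpr rfl]; exact hc
    | cons x l ih =>
      intro c hc h
      rw [List.sum_cons]
      refine le_trans (hnm_add x l.sum) (max_le (h x (List.mem_cons_self (a := x) (l := l))) ?_)
      exact ih c hc (fun y hy => h y (List.mem_cons_of_mem x hy))
  -- common denominators
  have hCD : ∀ l : List L, ∃ d : A, φ d ≠ 0 ∧ ∀ x ∈ l, ∃ a : A, x * φ d = φ a := by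
    intro l
    induction l with
    | nil => exact ⟨1, by rw [map_one]; exact one_ne_zero, fun x hx => absurd hx (List.not_mem_nil (a := x))⟩
    | cons x l ih =>
      obtain ⟨d, hd, hl⟩ := ih
      refine ⟨dnA x * d, by rw [map_mul]; exact mul_ne_zero (hdn x) hd, ?_⟩
      intro y hy
      rcases List.mem_cons.mp hy with rfl | hy
      · exact ⟨nmA y * d, by rw [map_mul, map_mul, ← hnd y]; ring⟩
      · obtain ⟨a, ha⟩ := hl y hy
        exact ⟨a * dnA x, by rw [map_mul, map_mul, ← ha]; ring⟩
  -- transfer of the square-sum condition to L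
  have hsos_den : ∀ (d : A) (rl : List L), (∀ w ∈ rl, ∃ a : A, w * φ d = φ a) →
      ∃ gl : List A, (∀ u ∈ gl, ∃ y : A, u = y * y) ∧
        ((rl.map (fun y => y * y)).sum) * (φ d * φ d) = φ gl.sum := by
    intro d rl
    induction rl with
    | nil => intro _; exact ⟨[], fun u hu => absurd hu (List.not_mem_nil (a := u)), by simp⟩
    | cons w rl ih =>
      intro h
      obtain ⟨gl, hgl, hsum⟩ := ih (fun u hu => h u (List.mem_cons_of_mem w hu))
      obtain ⟨a, ha⟩ := h w (List.mem_cons_self (a := w) (l := rl))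
      refine ⟨(a * a) :: gl, ?_, ?_⟩
      · intro u hu
        rcases List.mem_cons.mp hu with rfl | hu
        · exact ⟨a, rfl⟩
        · exact hgl u hu
      · rw [List.map_cons, List.sum_cons, List.sum_cons, map_add, add_mul, hsum]
        congr 1
        rw [map_mul, ← ha]; ring
  have hkey : ∀ (x : L) (rl : List L), nm (x * x) ≤ nm (x * x + (rl.map (fun y => y * y)).sum) := by
    intro x rl
    obtain ⟨d, hd, hrl⟩ := hCD (x :: rl)
    obtain ⟨a, ha⟩ := hrl x (List.mem_cons_self (a := x) (l := rl))
    obtain ⟨gl, hgl, hsum⟩ := hsos_den d rl (fun w hw => hrl w (List.mem_cons_of_mem x hw))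
    have hd2 : φ (d * d) ≠ 0 := by rw [map_mul]; exact mul_ne_zero hd hd
    have he1 : (x * x) * φ (d * d) = φ (a * a) := by
      rw [map_mul, map_mul, ← ha]; ring
    have he2 : (x * x + (rl.map (fun y => y * y)).sum) * φ (d * d) = φ (a * a + gl.sum) := by
      rw [map_add, ← hsum, ← he1, map_mul]; ring
    rw [hnm_eq _ _ _ hd2 he1, hnm_eq _ _ _ hd2 he2]
    have hpos : 0 < η (d * d) := by
      rcases lt_or_eq_of_le (hη.nonneg (d * d)) with h | h
      · exact h
      · exact absurd ((hφ0 _).mpr h.symm) hd2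
    exact (div_le_div_iff_of_pos_right hpos).mpr (hC a gl hgl)
  -- the preordering T
  let T : Set L := {x : L | ∃ pl : List (L × L), (∀ q ∈ pl, nm q.2 < 1) ∧
    x = (pl.map (fun q => q.1 * q.1 * (1 + q.2))).sum}
  have hT0 : (0 : L) ∈ T := ⟨[], fun q hq => absurd hq (List.not_mem_nil (a := q)), by simp⟩
  have hTsq : ∀ y : L, y * y ∈ T := by
    intro y
    refine ⟨[(y, 0)], ?_, by simp⟩
    intro q hq
    rcases List.mem_cons.mp hq with rfl | hq
    · rw [(hnm_zero 0).mpr rfl]; norm_num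
    · exact absurd hq (List.not_mem_nil (a := q))
  have hTone : (1 : L) ∈ T := by
    have := hTsq 1; rwa [mul_one] at this
  have hT1m : ∀ m : L, nm m < 1 → (1 + m) ∈ T := by
    intro m hm
    refine ⟨[(1, m)], ?_, by simp⟩
    intro q hq
    rcases List.mem_cons.mp hq with rfl | hq
    · exact hm
    · exact absurd hq (List.not_mem_nil (a := q))
  have hTadd : ∀ a ∈ T, ∀ b ∈ T, a + b ∈ T := by
    rintro a ⟨pl, hpl, rfl⟩ b ⟨pl', hpl', rfl⟩
    refine ⟨pl ++ pl', ?_, by rw [List.map_append, List.sum_append]⟩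
    intro q hq
    rcases List.mem_append.mp hq with h | h
    · exact hpl q h
    · exact hpl' q h
  have hrow : ∀ (q : L × L) (pl' : List (L × L)),
      ((pl'.map (fun r => (q.1 * r.1, q.2 + r.2 + q.2 * r.2))).map
        (fun s => s.1 * s.1 * (1 + s.2))).sum
      = (q.1 * q.1 * (1 + q.2)) * ((pl'.map (fun s => s.1 * s.1 * (1 + s.2))).sum) := by
    intro q pl'
    induction pl' with
    | nil => simp
    | cons r pl' ih =>
      simp only [List.map_cons, List.sum_cons, ih]
      ring
  have hTmul : ∀ a ∈ T, ∀ b ∈ T, a * b ∈ T := by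
    rintro a ⟨pl, hpl, rfl⟩ b ⟨pl', hpl', rfl⟩
    refine ⟨pl.flatMap (fun q => pl'.map (fun r => (q.1 * r.1, q.2 + r.2 + q.2 * r.2))), ?_, ?_⟩
    · intro s hs
      rw [List.mem_flatMap] at hs
      obtain ⟨q, hq, hs⟩ := hs
      rw [List.mem_map] at hs
      obtain ⟨r, hr, rfl⟩ := hs
      have h1 := hpl q hq
      have h2 := hpl' r hr
      have hq2 := hnm_nonneg q.2
      have hr2 := hnm_nonneg r.2
      calc nm (q.2 + r.2 + q.2 * r.2) ≤ max (max (nm q.2) (nm r.2)) (nm (q.2 * r.2)) :=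
            le_trans (hnm_add _ _) (max_le_max (hnm_add _ _) (le_refl _))
        _ < 1 := by
            rw [hnm_mul]
            apply max_lt (max_lt h1 h2)
            nlinarith
    · induction pl with
      | nil => simp
      | cons q pl ih =>
        simp only [List.flatMap_cons, List.map_append, List.sum_append, List.map_cons,
          List.sum_cons, add_mul]
        rw [hrow q pl', ih (fun q hq => hpl q (List.mem_cons_of_mem _ hq))]
  -- helper facts about lists
  have hmm2 : ∀ pl : List (L × L), ((pl.map (fun q => q.1)).map (fun y => y * y)).sum
      = (pl.map (fun q => q.1 * q.1)).sum := by
    intro pl; rw [List.map_map]; rfl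
  have hsplit : ∀ pl : List (L × L), (pl.map (fun q => q.1 * q.1 * (1 + q.2))).sum
      = (pl.map (fun q => q.1 * q.1)).sum + (pl.map (fun q => q.1 * q.1 * q.2)).sum := by
    intro pl
    induction pl with
    | nil => simp
    | cons q pl ih =>
      simp only [List.map_cons, List.sum_cons, ih]
      ring
  have hfold0 : ∀ pl : List (L × L), 0 ≤ (pl.map (fun q => nm q.2)).foldr max 0 := by
    intro pl
    induction pl with
    | nil => simp
    | cons q pl ih =>
      simp only [List.map_cons, List.foldr_cons]
      exact le_trans ih (le_max_right _ _)
  have hfoldlt : ∀ pl : List (L × L), (∀ q ∈ pl, nm q.2 < 1) →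
      (pl.map (fun q => nm q.2)).foldr max 0 < 1 := by
    intro pl
    induction pl with
    | nil => intro _; simp
    | cons q pl ih =>
      intro h
      simp only [List.map_cons, List.foldr_cons]
      exact max_lt (h q (List.mem_cons_self (a := q) (l := pl))) (ih (fun r hr => h r (List.mem_cons_of_mem q hr)))
  have hfoldge : ∀ (pl : List (L × L)) (q : L × L), q ∈ pl →
      nm q.2 ≤ (pl.map (fun r => nm r.2)).foldr max 0 := by
    intro pl
    induction pl with
    | nil => intro q hq; exact absurd hq (List.not_mem_nil (a := q))
    | cons r pl ih =>
      intro q hq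
      simp only [List.map_cons, List.foldr_cons]
      rcases List.mem_cons.mp hq with rfl | hq
      · exact le_max_left _ _
      · exact le_trans (ih q hq) (le_max_right _ _)
  -- T is proper
  have hTproper : (-1 : L) ∉ T := by
    rintro ⟨pl, hpl, heq⟩
    have hse := hsplit pl
    set s : L := (pl.map (fun q => q.1 * q.1)).sum with hsdef
    set e : L := (pl.map (fun q => q.1 * q.1 * q.2)).sum with hedef
    have h1s : (1 : ℝ) ≤ nm (1 + s) := by
      have h := hkey 1 (pl.map (fun q => q.1))
      rw [mul_one, hnm_one, hmm2 pl, ← hsdef] at h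
      exact h
    have htermgen : ∀ (pl' : List (L × L)) (rl : List L) (q : L × L), q ∈ pl' →
        nm (q.1 * q.1) ≤ nm ((rl.map (fun y => y * y)).sum
          + (pl'.map (fun r => r.1 * r.1)).sum) := by
      intro pl'
      induction pl' with
      | nil => intro rl q hq; exact absurd hq (List.not_mem_nil (a := q))
      | cons r pl' ih =>
        intro rl q hq
        rcases List.mem_cons.mp hq with rfl | hq
        · have h := hkey q.1 (rl ++ pl'.map (fun r => r.1))
          rw [List.map_append, List.sum_append, hmm2 pl'] at h
          have e : q.1 * q.1 + ((rl.map (fun y => y * y)).sum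
              + (pl'.map (fun r => r.1 * r.1)).sum)
              = (rl.map (fun y => y * y)).sum
              + ((q :: pl').map (fun r => r.1 * r.1)).sum := by
            rw [List.map_cons, List.sum_cons]; ring
          rwa [e] at h
        · have h := ih (r.1 :: rl) q hq
          have e : ((r.1 :: rl).map (fun y => y * y)).sum
              + (pl'.map (fun r => r.1 * r.1)).sum
              = (rl.map (fun y => y * y)).sum
              + ((r :: pl').map (fun s => s.1 * s.1)).sum := by
            rw [List.map_cons, List.sum_cons, List.map_cons, List.sum_cons]; ring
          rwa [e] at h
    have hterm : ∀ q ∈ pl, nm (q.1 * q.1) ≤ nm (1 + s) := by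
      intro q hq
      have h := htermgen pl [(1 : L)] q hq
      have e : (([(1 : L)]).map (fun y => y * y)).sum
          + (pl.map (fun r => r.1 * r.1)).sum = 1 + s := by
        simp [hsdef]
      rwa [e] at h
    set t : ℝ := (pl.map (fun q => nm q.2)).foldr max 0 with htdef
    have ht0 : 0 ≤ t := hfold0 pl
    have ht1 : t < 1 := hfoldlt pl hpl
    have hnm1s : 0 ≤ nm (1 + s) := hnm_nonneg _
    have herr : nm e ≤ t * nm (1 + s) := by
      rw [hedef]
      apply hnm_listsum _ _ (mul_nonneg ht0 hnm1s)
      intro x hx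
      rw [List.mem_map] at hx
      obtain ⟨q, hq, rfl⟩ := hx
      rw [hnm_mul]
      rw [mul_comm t]
      exact mul_le_mul (hterm q hq) (hfoldge pl q hq) (hnm_nonneg _) hnm1s
    have hne : (1 : L) + s = -e := by
      rw [hse] at heq
      linear_combination -heq
    have : nm (1 + s) ≤ t * nm (1 + s) := by
      calc nm (1 + s) = nm e := by rw [hne, hnm_neg]
        _ ≤ t * nm (1 + s) := herr
    nlinarith
  -- Zorn's lemma: extend T to a maximal proper "preordering"
  let SP : Set (Set L) := {Q : Set L | T ⊆ Q ∧ (∀ a ∈ Q, ∀ b ∈ Q, a + b ∈ Q) ∧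
    (∀ a ∈ Q, ∀ b ∈ Q, a * b ∈ Q) ∧ (-1 : L) ∉ Q}
  have hTSP : T ∈ SP := ⟨subset_rfl, hTadd, hTmul, hTproper⟩
  obtain ⟨P, hTP, hPmax⟩ := zorn_subset_nonempty SP (by
    intro c hcS hchain hcne
    refine ⟨⋃₀ c, ⟨?_, ?_, ?_, ?_⟩, fun Q hQ => Set.subset_sUnion_of_mem hQ⟩
    · obtain ⟨Q, hQ⟩ := hcne
      exact subset_trans (hcS hQ).1 (Set.subset_sUnion_of_mem hQ)
    · rintro a ⟨Q1, hQ1, ha⟩ b ⟨Q2, hQ2, hb⟩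
      rcases hchain.total hQ1 hQ2 with h | h
      · exact ⟨Q2, hQ2, (hcS hQ2).2.1 a (h ha) b hb⟩
      · exact ⟨Q1, hQ1, (hcS hQ1).2.1 a ha b (h hb)⟩
    · rintro a ⟨Q1, hQ1, ha⟩ b ⟨Q2, hQ2, hb⟩
      rcases hchain.total hQ1 hQ2 with h | h
      · exact ⟨Q2, hQ2, (hcS hQ2).2.2.1 a (h ha) b hb⟩
      · exact ⟨Q1, hQ1, (hcS hQ1).2.2.1 a ha b (h hb)⟩
    · rintro ⟨Q, hQ, hmem⟩
      exact (hcS hQ).2.2.2 hmem) T hTSP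
  obtain ⟨hTP', hPadd, hPmul, hPn1⟩ := hPmax.prop
  -- P is an ordering: trivial support and totality
  have hPsupp : ∀ z : L, z ∈ P → -z ∈ P → z = 0 := by
    intro z h1 h2
    by_contra hz
    apply hPn1
    have hz2 : z * -z * (z⁻¹ * z⁻¹) = -1 := by
      linear_combination (-(z * z⁻¹) - 1) * mul_inv_cancel₀ hz
    rw [← hz2]
    exact hPmul _ (hPmul _ h1 _ h2) _ (hTP' (hTsq z⁻¹))
  have hPtotal : ∀ x : L, x ∈ P ∨ -x ∈ P := by
    intro x
    by_cases hx : -x ∈ P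
    · exact Or.inr hx
    left
    have hQ'SP : {u : L | ∃ a ∈ P, ∃ b ∈ P, u = a + x * b} ∈ SP := by
      refine ⟨?_, ?_, ?_, ?_⟩
      · intro u hu
        exact ⟨u, hTP' hu, 0, hTP' hT0, by ring⟩
      · rintro u ⟨a, ha, b, hb, rfl⟩ w ⟨a', ha', b', hb', rfl⟩
        exact ⟨a + a', hPadd a ha a' ha', b + b', hPadd b hb b' hb', by ring⟩
      · rintro u ⟨a, ha, b, hb, rfl⟩ w ⟨a', ha', b', hb', rfl⟩
        refine ⟨a * a' + (x * x) * (b * b'), ?_, a * b' + a' * b, ?_, by ring⟩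
        · exact hPadd _ (hPmul a ha a' ha') _ (hPmul _ (hTP' (hTsq x)) _ (hPmul b hb b' hb'))
        · exact hPadd _ (hPmul a ha b' hb') _ (hPmul a' ha' b hb)
      · rintro ⟨a, ha, b, hb, heq⟩
        by_cases hb0 : b = 0
        · rw [hb0, mul_zero, add_zero] at heq
          rw [← heq] at ha
          exact hPn1 ha
        · apply hx
          have hx2 : -x = (1 + a) * b * (b⁻¹ * b⁻¹) := by
            have hbb : b * b⁻¹ = 1 := mul_inv_cancel₀ hb0
            have h1 : -x * (b * b) = (1 + a) * b := by linear_combination b * heq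
            calc -x = -x * (b * b) * (b⁻¹ * b⁻¹) := by
                  rw [show -x * (b * b) * (b⁻¹ * b⁻¹) = -x * ((b * b⁻¹) * (b * b⁻¹)) by ring,
                    hbb]
                  ring
              _ = (1 + a) * b * (b⁻¹ * b⁻¹) := by rw [h1]
          rw [hx2]
          exact hPmul _ (hPmul _ (hPadd 1 (hTP' hTone) a ha) _ hb) _ (hTP' (hTsq b⁻¹))
    have hsub : {u : L | ∃ a ∈ P, ∃ b ∈ P, u = a + x * b} ⊆ P := by
      apply hPmax.2 hQ'SP
      intro a ha
      exact ⟨a, ha, 0, hTP' hT0, by ring⟩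
    exact hsub ⟨0, hTP' hT0, 1, hTP' hTone, by ring⟩
  -- compatibility of the ordering with the seminorm
  have hcompat : ∀ u t : L, u ∈ P → t - u ∈ P → nm u ≤ nm t := by
    intro u t hu htu
    by_contra hlt
    push_neg at hlt
    have hu0 : u ≠ 0 := by
      rintro rfl
      rw [(hnm_zero 0).mpr rfl] at hlt
      exact absurd (hnm_nonneg t) (by linarith)
    have hnmu : 0 < nm u := lt_of_le_of_ne (hnm_nonneg u) (Ne.symm (fun h => hu0 ((hnm_zero u).mp h)))
    have hm : nm (t * u⁻¹) < 1 := by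
      rw [hnm_mul, hnm_inv u hu0]
      rw [mul_inv_lt_iff₀ hnmu, one_mul]
      exact hlt
    have h1m : (1 - t * u⁻¹) ∈ P := by
      have := hT1m (-(t * u⁻¹)) (by rwa [hnm_neg])
      rw [show (1 : L) + -(t * u⁻¹) = 1 - t * u⁻¹ by ring] at this
      exact hTP' this
    have h2 : u - t ∈ P := by
      have := hPmul _ hu _ h1m
      rw [show u * (1 - t * u⁻¹) = u - u * u⁻¹ * t by ring, mul_inv_cancel₀ hu0, one_mul] at this
      exact this
    have h3 := hPsupp _ htu (by rwa [neg_sub])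
    have h4 : t = u := by linear_combination h3
    rw [h4] at hlt
    exact lt_irrefl _ hlt
  -- the prime cone
  have hconeP : IsPrimeCone {f : A | φ f ∈ P} := by
    constructor
    · intro h
      have : φ (-1 : A) = -1 := by rw [map_neg, map_one]
      rw [Set.mem_setOf_eq, this] at h
      exact hPn1 h
    · intro x y hx hy
      rw [Set.mem_setOf_eq, map_add]
      exact hPadd _ hx _ hy
    · intro x y hx hy
      rw [Set.mem_setOf_eq, map_mul]
      exact hPmul _ hx _ hy
    · intro x
      rcases hPtotal (φ x) with h | h
      · exact Or.inl h
      · right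
        rw [Set.mem_setOf_eq, map_neg]
        exact h
    · intro x y hxy hnxy
      rw [Set.mem_setOf_eq, map_neg] at hnxy
      have h0 := hPsupp _ hxy hnxy
      rw [map_mul] at h0
      rcases mul_eq_zero.mp h0 with h | h
      · left
        constructor
        · rw [Set.mem_setOf_eq, h]; exact hTP' hT0
        · rw [Set.mem_setOf_eq, map_neg, h, neg_zero]; exact hTP' hT0
      · right
        constructor
        · rw [Set.mem_setOf_eq, h]; exact hTP' hT0
        · rw [Set.mem_setOf_eq, map_neg, h, neg_zero]; exact hTP' hT0
  refine ⟨⟨_, hconeP⟩, ?_, ?_⟩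
  · -- the point is Archimedean
    intro a b hb
    have hφb : φ b ≠ 0 := by
      intro h0
      exact hb ⟨by rw [Set.mem_setOf_eq, h0]; exact hTP' hT0,
        by rw [Set.mem_setOf_eq, map_neg, h0, neg_zero]; exact hTP' hT0⟩
    obtain ⟨k, hk0, hk⟩ := v_unbdd hv hnt (nm (φ a * (φ b)⁻¹))
    refine ⟨k, ?_⟩
    show φ ((algebraMap 𝕂 A k * b - a) * b) ∈ P
    have hκ : φ (algebraMap 𝕂 A k) ∈ P := by
      obtain ⟨c, hc⟩ := IsRealClosedField.isSquare_of_nonneg k hk0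
      rw [hc, map_mul, map_mul]
      exact hTP' (hTsq _)
    have hκx : φ (algebraMap 𝕂 A k) - φ a * (φ b)⁻¹ ∈ P := by
      rcases hPtotal (φ (algebraMap 𝕂 A k) - φ a * (φ b)⁻¹) with h | h
      · exact h
      · exfalso
        rw [neg_sub] at h
        have := hcompat _ _ hκ h
        rw [hnm_phi, hη.map_algebraMap] at this
        linarith
    have heq : φ ((algebraMap 𝕂 A k * b - a) * b)
        = (φ (algebraMap 𝕂 A k) - φ a * (φ b)⁻¹) * (φ b * φ b) := by
      rw [map_mul, map_sub, map_mul]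
      linear_combination (φ a * φ b) * mul_inv_cancel₀ hφb
    rw [heq]
    exact hPmul _ hκx _ (hTP' (hTsq (φ b)))
  · -- η is recovered by ψ
    funext f
    show η f = sSup {r : ℝ | ∃ k : 𝕂, 0 ≤ k ∧
      (f * f - algebraMap 𝕂 A (k * k)) ∈ {g : A | φ g ∈ P} ∧ r = v k}
    set Sf : Set ℝ := {r : ℝ | ∃ k : 𝕂, 0 ≤ k ∧
      (f * f - algebraMap 𝕂 A (k * k)) ∈ {g : A | φ g ∈ P} ∧ r = v k} with hSf
    have hub : ∀ r ∈ Sf, r ≤ η f := by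
      rintro r ⟨k, hk0, hmem, rfl⟩
      have hκ2 : φ (algebraMap 𝕂 A (k * k)) ∈ P := by
        rw [map_mul (algebraMap 𝕂 A), map_mul]
        exact hTP' (hTsq _)
      have hc := hcompat (φ (algebraMap 𝕂 A (k * k))) (φ (f * f)) hκ2
        (by rw [← map_sub]; exact hmem)
      rw [hnm_phi, hnm_phi, hη.map_algebraMap, hη.map_mul, hv.map_mul] at hc
      nlinarith [hv.nonneg k, hη.nonneg f]
    have h0mem : (0 : ℝ) ∈ Sf := by
      refine ⟨0, le_refl 0, ?_, (v_zero hv).symm⟩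
      rw [mul_zero, map_zero, sub_zero]
      show φ (f * f) ∈ P
      rw [map_mul]
      exact hTP' (hTsq _)
    have hbdd : BddAbove Sf := ⟨η f, hub⟩
    apply le_antisymm
    · by_contra hlt
      push_neg at hlt
      have hsup0 : 0 ≤ sSup Sf := le_csSup hbdd h0mem
      have hηfpos : 0 < η f := lt_of_le_of_lt hsup0 hlt
      have ha : 0 < max (sSup Sf) (η f / 2) :=
        lt_of_lt_of_le (by linarith) (le_max_right _ _)
      have hab : max (sSup Sf) (η f / 2) < η f := max_lt hlt (by linarith)
      obtain ⟨k, hk0, hak, hkb⟩ := v_dense hv hnt ha hab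
      have hmem : v k ∈ Sf := by
        refine ⟨k, hk0, ?_, rfl⟩
        show φ (f * f - algebraMap 𝕂 A (k * k)) ∈ P
        rcases hPtotal (φ (f * f - algebraMap 𝕂 A (k * k))) with h | h
        · exact h
        · exfalso
          have hsq : φ (f * f) ∈ P := by rw [map_mul]; exact hTP' (hTsq _)
          have hrw : -φ (f * f - algebraMap 𝕂 A (k * k))
              = φ (algebraMap 𝕂 A (k * k)) - φ (f * f) := by
            rw [← map_neg, ← map_sub]
            congr 1
            ring
          rw [hrw] at h
          have hc := hcompat _ _ hsq h
          rw [hnm_phi, hnm_phi, hη.map_mul, hη.map_algebraMap, hv.map_mul] at hc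
          nlinarith [hη.nonneg f, hv.nonneg k]
      have h1 := le_csSup hbdd hmem
      have h2 : sSup Sf < v k := lt_of_le_of_lt (le_max_left _ _) hak
      linarith
    · exact csSup_le ⟨0, h0mem⟩ hub

end RCFaux


/-- **The image of the Archimedean spectrum is closed in the Berkovich analytification.**
Let `𝕂` be a real closed field with a nontrivial non-Archimedean absolute value `v`
compatible with the order, and `A` a `𝕂`-algebra.  Then the image `T` of the canonical map
`ψ : Spec_arch(A) → M(A)` is a closed subset of the Berkovich analytification `M(A)`
(the space of multiplicative seminorms on `A`, with the topology of pointwise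
convergence). -/
theorem image_archSpectrum_closed_in_berkovich
    (v : 𝕂 → ℝ) (hv : IsNonarchAbsValue 𝕂 v) (hnt : ∃ k : 𝕂, k ≠ 0 ∧ v k ≠ 1) :
    IsClosed {η : {η : A → ℝ // IsMultSeminorm 𝕂 A v η} |
      ∃ α : RealSpectrum A, RealSpectrum.IsArchPoint 𝕂 α ∧ η.1 = psiFun 𝕂 A v α} := by
  have hCclosed : IsClosed {η : A → ℝ | ∀ (g : A) (l : List A),
      (∀ x ∈ l, ∃ y, x = y * y) → η (g * g) ≤ η (g * g + l.sum)} := by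
    have heq : {η : A → ℝ | ∀ (g : A) (l : List A),
        (∀ x ∈ l, ∃ y, x = y * y) → η (g * g) ≤ η (g * g + l.sum)}
        = ⋂ (g : A), ⋂ (l : List A), ⋂ (_ : ∀ x ∈ l, ∃ y : A, x = y * y),
          {η : A → ℝ | η (g * g) ≤ η (g * g + l.sum)} := by
      ext η
      simp only [Set.mem_setOf_eq, Set.mem_iInter]
    rw [heq]
    exact isClosed_iInter fun g => isClosed_iInter fun l => isClosed_iInter fun _ =>
      isClosed_le (continuous_apply _) (continuous_apply _)
  have hset : {η : {η : A → ℝ // IsMultSeminorm 𝕂 A v η} |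
      ∃ α : RealSpectrum A, RealSpectrum.IsArchPoint 𝕂 α ∧ η.1 = psiFun 𝕂 A v α}
      = Subtype.val ⁻¹' {η : A → ℝ | ∀ (g : A) (l : List A),
        (∀ x ∈ l, ∃ y, x = y * y) → η (g * g) ≤ η (g * g + l.sum)} := by
    ext η
    simp only [Set.mem_setOf_eq, Set.mem_preimage]
    constructor
    · rintro ⟨α, hα, hψ⟩ g l hl
      rw [hψ]
      exact RCFaux.forward v hv α hα g l hl
    · intro h
      obtain ⟨α, hα, hψ⟩ := RCFaux.backward v hv hnt η.1 η.2 h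
      exact ⟨α, hα, hψ⟩
  rw [hset]
  exact IsClosed.preimage continuous_subtype_val hCclosed

end
end
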